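/- arXiv:2405.15709 — 6 statements merged into one kernel-verified Lean document; each statement's English description precedes it below -/
import Mathlib

section
/- Let f be a measurable predictor, I = {I_1, …, I_B} a fixed finite measurable partition of (0,1], and S = {(X_m, Y_m)}_{m=1}^n an i.i.d. sample from D. Then the binned true calibration error is dominated in expectation by the expected calibration error: TCE(f_I) ≤ E_S[ECE(f, S)]. -/
open MeasureTheory Set

noncomputable section

namespace Calib

variable {X : Type*} [MeasurableSpace X]

/-- Bin loss `l_I(z) = (y - f(x)) · 1_{f(x) ∈ I}`. -/
def binLoss (f : X → ℝ) (I : Set ℝ) (z : X × ℝ) : ℝ :=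
  (z.2 - f z.1) * I.indicator (fun _ => (1 : ℝ)) (f z.1)

/-- Sum-form TCE of the binned predictor: `Σ_i |E[(Y - f(X)) · 1_{f(X) ∈ I_i}]|`. -/
def TCEsum (D : Measure (X × ℝ)) (f : X → ℝ) {B : ℕ} (I : Fin B → Set ℝ) : ℝ :=
  ∑ i, |∫ z, binLoss f (I i) z ∂D|

/-- Expected calibration error of `f` over a finite sample `S` with bins `I`. -/
def ECE (f : X → ℝ) {B : ℕ} (I : Fin B → Set ℝ) {n : ℕ} (S : Fin n → X × ℝ) : ℝ :=
  ∑ i, |(1 / (n : ℝ)) * ∑ m, binLoss f (I i) (S m)|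

/-- Conditional mean `E[f(X) | f(X) ∈ I]` (zero if the conditioning event is null). -/
def condMean (D : Measure (X × ℝ)) (f : X → ℝ) (I : Set ℝ) : ℝ :=
  (∫ z, I.indicator (fun _ => f z.1) (f z.1) ∂D) / (D {z | f z.1 ∈ I}).toReal

/-- Binned predictor `f_I(x) = Σ_i E[f(X) | f(X) ∈ I_i] · 1_{f(x) ∈ I_i}`. -/
def binnedPred (D : Measure (X × ℝ)) (f : X → ℝ) {B : ℕ} (I : Fin B → Set ℝ) (x : X) : ℝ :=
  ∑ i, condMean D f (I i) * (I i).indicator (fun _ => (1 : ℝ)) (f x)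

/-- The conditional expectation `E[Y | g(X)]` as a function on `X × ℝ`. -/
def condY (D : Measure (X × ℝ)) (g : X → ℝ) : X × ℝ → ℝ :=
  D[(fun w : X × ℝ => w.2) | MeasurableSpace.comap (fun w : X × ℝ => g w.1) inferInstance]

/-- True calibration error `TCE(g) = E|E[Y | g(X)] - g(X)|`. -/
def TCE (D : Measure (X × ℝ)) (g : X → ℝ) : ℝ :=
  ∫ z, |condY D g z - g z.1| ∂D

/-- `I` is a finite measurable partition of `(0,1]`. -/
def IsBinning {B : ℕ} (I : Fin B → Set ℝ) : Prop :=
  (∀ i, MeasurableSet (I i)) ∧ Pairwise (Function.onFun Disjoint I) ∧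
    (⋃ i, I i) = Set.Ioc (0 : ℝ) 1

/-- Uniform-width binning: `I_i = (i/B, (i+1)/B]` for `i = 0, …, B-1`. -/
def uwb (B : ℕ) (i : Fin B) : Set ℝ :=
  Set.Ioc ((i : ℝ) / B) (((i : ℝ) + 1) / B)

/-- The `i`-th value (0-indexed) of the nondecreasing rearrangement of `v`. -/
def orderStat {n : ℕ} (v : Fin n → ℝ) (i : Fin n) : ℝ :=
  (v ∘ Tuple.sort v) i

/-- Boundaries for uniform-mass binning: `u_0 = 0`, `u_b = f_(⌊nb/B⌋)` for `1 ≤ b ≤ B-1`,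
`u_B = 1`. -/
def umbBoundary {n : ℕ} (v : Fin n → ℝ) (B b : ℕ) : ℝ :=
  if b = 0 then 0
  else if b < B then
    if h : n * b / B - 1 < n then orderStat v ⟨n * b / B - 1, h⟩ else 1
  else 1

/-- Uniform-mass binning built from the values `v = (f(x_1), …, f(x_n))`:
`I_b = (u_{b-1}, u_b]`. -/
def umb {n : ℕ} (v : Fin n → ℝ) (B : ℕ) (i : Fin B) : Set ℝ :=
  Set.Ioc (umbBoundary v B i.val) (umbBoundary v B (i.val + 1))

/-- Lipschitz calibration assumption: there is an `L`-Lipschitz `g : [0,1] → [0,1]` with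
`E[Y | f(X)] = g(f(X))` a.s. -/
def LipCalib (D : Measure (X × ℝ)) (f : X → ℝ) (L : ℝ) : Prop :=
  ∃ g : ℝ → ℝ, (∀ u ∈ Set.Icc (0 : ℝ) 1, g u ∈ Set.Icc (0 : ℝ) 1) ∧
    (∀ u ∈ Set.Icc (0 : ℝ) 1, ∀ v ∈ Set.Icc (0 : ℝ) 1, |g u - g v| ≤ L * |u - v|) ∧
    condY D f =ᵐ[D] fun w => g (f w.1)

/-!
For every bin `I`, each sample point `S m` is distributed as `D`, so the empirical bin loss
`(1/n) ∑ₘ l_I(S m)` is an unbiased estimator of `E[l_I]`. Hence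
`|E[l_I]| = |E_S[(1/n) ∑ₘ l_I(S m)]| ≤ E_S|(1/n) ∑ₘ l_I(S m)|`, and summing over the bins
gives the claim. Since `Y` and `f(X)` lie in `[0,1]`, every bin loss is bounded, hence integrable.
-/

section EmpiricalMean

variable {α : Type*} [MeasurableSpace α] {D : Measure α} [IsProbabilityMeasure D] {n : ℕ}

def empiricalMean (g : α → ℝ) (S : Fin n → α) : ℝ :=
  (1 / (n : ℝ)) * ∑ m, g (S m)

lemma integrable_empiricalMean {g : α → ℝ} (hg : Integrable g D) :
    Integrable (empiricalMean g) (Measure.pi fun _ : Fin n => D) :=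
  (integrable_finsetSum _ fun _ _ => integrable_comp_eval hg).const_mul _

lemma integral_empiricalMean (hn : n ≠ 0) {g : α → ℝ} (hg : Integrable g D) :
    ∫ S, empiricalMean g S ∂(Measure.pi fun _ : Fin n => D) = ∫ z, g z ∂D := by
  simp only [empiricalMean]
  rw [integral_const_mul, integral_finsetSum _ fun _ _ => integrable_comp_eval hg]
  simp only [integral_comp_eval (μ := fun _ : Fin n => D) hg.aestronglyMeasurable,
    Finset.sum_const, Finset.card_univ, Fintype.card_fin, nsmul_eq_mul]
  field_simp

lemma sum_abs_integral_le_integral_sum_abs_empiricalMean {ι : Type*} [Fintype ι]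
    (hn : n ≠ 0) {g : ι → α → ℝ} (hg : ∀ i, Integrable (g i) D) :
    ∑ i, |∫ z, g i z ∂D| ≤
      ∫ S, ∑ i, |empiricalMean (g i) S| ∂(Measure.pi fun _ : Fin n => D) := by
  rw [integral_finsetSum _ fun i _ => (integrable_empiricalMean (hg i)).abs]
  gcongr with i
  rw [← integral_empiricalMean hn (hg i)]
  exact abs_integral_le_integral_abs

end EmpiricalMean

omit [MeasurableSpace X] in
lemma abs_binLoss_le_one {f : X → ℝ} {I : Set ℝ} {z : X × ℝ} (hy : z.2 ∈ Icc (0 : ℝ) 1)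
    (hfz : f z.1 ∈ Icc (0 : ℝ) 1) : |binLoss f I z| ≤ 1 := by
  have hres : |z.2 - f z.1| ≤ 1 := abs_sub_le_of_nonneg_of_le hy.1 hy.2 hfz.1 hfz.2
  have hind : |I.indicator (fun _ => (1 : ℝ)) (f z.1)| ≤ 1 := by
    by_cases h : f z.1 ∈ I <;> simp [h]
  rw [binLoss, abs_mul]
  exact mul_le_one₀ hres (abs_nonneg _) hind

lemma measurable_binLoss {f : X → ℝ} (hf : Measurable f) {I : Set ℝ} (hI : MeasurableSet I) :
    Measurable (binLoss f I) :=
  (measurable_snd.sub (hf.comp measurable_fst)).mul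
    ((measurable_const.indicator hI).comp (hf.comp measurable_fst))

lemma integrable_binLoss {D : Measure (X × ℝ)} [IsFiniteMeasure D]
    (hY : ∀ᵐ z ∂D, z.2 ∈ Icc (0 : ℝ) 1) {f : X → ℝ} (hf : Measurable f)
    (hrange : ∀ x, f x ∈ Icc (0 : ℝ) 1) {I : Set ℝ} (hI : MeasurableSet I) :
    Integrable (binLoss f I) D :=
  Integrable.of_bound (measurable_binLoss hf hI).aestronglyMeasurable 1
    (hY.mono fun _ hy => abs_binLoss_le_one hy (hrange _))

/-- For a fixed finite measurable partition `I` of `(0,1]` and an i.i.d.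
sample `S` of size `n` from `D`, the binned true calibration error is dominated in
expectation by the expected calibration error: `TCE(f_I) ≤ E_S[ECE(f, S)]`. -/
theorem tceSum_le_expectation_ece
    (D : Measure (X × ℝ)) [IsProbabilityMeasure D]
    (hY : ∀ᵐ z ∂D, z.2 = 0 ∨ z.2 = 1)
    (f : X → ℝ) (hf : Measurable f) (hrange : ∀ x, f x ∈ Set.Icc (0 : ℝ) 1)
    {B : ℕ} (I : Fin B → Set ℝ) (hI : IsBinning I)
    (n : ℕ) (hn : 0 < n) :
    TCEsum D f I ≤ ∫ S, ECE f I S ∂(Measure.pi fun _ : Fin n => D) := by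
  have hY01 : ∀ᵐ z ∂D, z.2 ∈ Icc (0 : ℝ) 1 :=
    hY.mono fun _ hy => by rcases hy with hy | hy <;> simp [hy]
  show ∑ i, |∫ z, binLoss f (I i) z ∂D| ≤
    ∫ S, ∑ i, |empiricalMean (binLoss f (I i)) S| ∂(Measure.pi fun _ : Fin n => D)
  exact sum_abs_integral_le_integral_sum_abs_empiricalMean hn.ne'
    fun i => integrable_binLoss hY01 hf hrange (hI.1 i)

end Calib
end
end

section
/- Let f be a measurable predictor and let I be the uniform-width binning with B bins (or any fixed finite measurable partition of (0,1] into B bins). For an i.i.d. sample S of size n from D, the expected statistical bias satisfies E_S|TCE(f_I) − ECE(f, S)| ≤ √(2 B log 2 / n). -/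
open MeasureTheory Set

noncomputable section

namespace Calib

variable {X : Type*} [MeasurableSpace X]

section Aux

variable {Z : Type*} [MeasurableSpace Z]

lemma intOfBound {P : Measure Z} [IsFiniteMeasure P] {g : Z → ℝ}
    (hm : Measurable g) {C : ℝ} (hb : ∀ z, |g z| ≤ C) : Integrable g P :=
  (integrable_const C).mono' hm.aestronglyMeasurable
    (Filter.Eventually.of_forall fun z => by simpa [Real.norm_eq_abs] using hb z)

lemma abs_int_le_sqrt (P : Measure Z) [IsProbabilityMeasure P]
    {g : Z → ℝ} (hm : Measurable g) {C : ℝ} (hb : ∀ z, |g z| ≤ C) :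
    ∫ z, |g z| ∂P ≤ Real.sqrt (∫ z, g z ^ 2 ∂P) := by
  have hCabs : ∀ z, |g z| ≤ |C| := fun z => (hb z).trans (le_abs_self C)
  have hint : Integrable (fun z => |g z|) P :=
    intOfBound hm.abs (C := |C|) (fun z => by simpa [abs_abs] using hCabs z)
  have hint2 : Integrable (fun z => g z ^ 2) P := by
    refine intOfBound (hm.pow_const 2) (C := C ^ 2) (fun z => ?_)
    have h1 : |g z| ^ 2 ≤ |C| ^ 2 := pow_le_pow_left₀ (abs_nonneg _) (hCabs z) 2
    calc |g z ^ 2| = |g z| ^ 2 := by rw [abs_of_nonneg (sq_nonneg _), sq_abs]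
      _ ≤ |C| ^ 2 := h1
      _ = C ^ 2 := sq_abs C
  set V := ∫ z, g z ^ 2 ∂P with hVdef
  have hV0 : 0 ≤ V := integral_nonneg fun z => sq_nonneg _
  have key : ∀ t : ℝ, 0 < t → ∫ z, |g z| ∂P ≤ (t + V / t) / 2 := by
    intro t ht
    have hpt : ∀ z, |g z| ≤ (t + g z ^ 2 / t) / 2 := by
      intro z
      have h1 : |g z| * (2 * t) ≤ t ^ 2 + g z ^ 2 := by
        nlinarith [sq_nonneg (|g z| - t), sq_abs (g z)]
      calc |g z| = |g z| * (2 * t) / (2 * t) := by field_simp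
        _ ≤ (t ^ 2 + g z ^ 2) / (2 * t) := by
            exact div_le_div_of_nonneg_right h1 (by positivity) |>.trans_eq rfl
        _ = (t + g z ^ 2 / t) / 2 := by field_simp
    calc ∫ z, |g z| ∂P ≤ ∫ z, (t + g z ^ 2 / t) / 2 ∂P :=
          integral_mono hint (((integrable_const t).add (hint2.div_const t)).div_const 2) hpt
      _ = (t + V / t) / 2 := by
          rw [integral_div, integral_add (integrable_const t) (hint2.div_const t),
            integral_const, integral_div]
          simp [measure_univ]
          rfl
  rcases eq_or_lt_of_le hV0 with h0 | hpos
  · have hle : ∫ z, |g z| ∂P ≤ 0 := by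
      by_contra hcon
      push_neg at hcon
      have := key (∫ z, |g z| ∂P) hcon
      rw [← h0] at this
      simp only [zero_div, add_zero] at this
      linarith
    exact hle.trans (Real.sqrt_nonneg _)
  · have := key (Real.sqrt V) (Real.sqrt_pos.2 hpos)
    rwa [Real.div_sqrt, add_self_div_two] at this

lemma integral_sq_sum_pi (P : Measure Z) [IsProbabilityMeasure P]
    {h : Z → ℝ} (hm : Measurable h) {C : ℝ} (hC : 0 ≤ C) (hb : ∀ z, |h z| ≤ C)
    (h0 : ∫ z, h z ∂P = 0) (n : ℕ) :
    ∫ S : Fin n → Z, (∑ m, h (S m)) ^ 2 ∂(Measure.pi fun _ : Fin n => P)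
      = n * ∫ z, h z ^ 2 ∂P := by
  letI : MeasureSpace Z := ⟨P⟩
  haveI : IsProbabilityMeasure (volume : Measure Z) := ‹IsProbabilityMeasure P›
  have hpi : (Measure.pi fun _ : Fin n => P) = (volume : Measure (Fin n → Z)) := rfl
  rw [hpi]
  have key : ∀ m m' : Fin n, ∫ S : Fin n → Z, h (S m) * h (S m')
      = (if m = m' then ∫ z, h z ^ 2 ∂P else 0) := by
    intro m m'
    have hrw : (fun S : Fin n → Z => h (S m) * h (S m'))
        = fun S => ∏ k, ((if k = m then h (S k) else 1) * (if k = m' then h (S k) else 1)) := by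
      funext S
      rw [Finset.prod_mul_distrib, Finset.prod_ite_eq', Finset.prod_ite_eq']
      simp
    rw [hrw, MeasureTheory.integral_fintype_prod_volume_eq_prod
      (f := fun k z => (if k = m then h z else 1) * (if k = m' then h z else 1))]
    by_cases hmm : m = m'
    · subst hmm
      have hv : (volume : Measure Z) = P := rfl
      rw [if_pos rfl, Finset.prod_eq_single m (fun k _ hk => by simp [if_neg hk])
        (fun hk => absurd (Finset.mem_univ m) hk), hv]
      simp [sq]
    · rw [if_neg hmm]
      refine Finset.prod_eq_zero (Finset.mem_univ m) ?_
      simp only [if_pos rfl, if_neg hmm, mul_one]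
      exact h0
  have hib : ∀ m m' : Fin n,
      Integrable (fun S : Fin n → Z => h (S m) * h (S m')) (volume : Measure (Fin n → Z)) := by
    intro m m'
    refine intOfBound (((hm.comp (measurable_pi_apply m))).mul
      ((hm.comp (measurable_pi_apply m')))) (C := C * C) (fun S => ?_)
    rw [abs_mul]
    exact mul_le_mul (hb _) (hb _) (abs_nonneg _) hC
  calc ∫ S : Fin n → Z, (∑ m, h (S m)) ^ 2
      = ∫ S : Fin n → Z, ∑ m, ∑ m', h (S m) * h (S m') := by
        congr 1
        funext S
        rw [sq, Finset.sum_mul_sum]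
    _ = ∑ m, ∑ m', ∫ S : Fin n → Z, h (S m) * h (S m') := by
        rw [integral_finset_sum _ (fun m _ => integrable_finset_sum _ (fun m' _ => hib m m'))]
        exact Finset.sum_congr rfl fun m _ => integral_finset_sum _ (fun m' _ => hib m m')
    _ = ∑ m : Fin n, ∫ z, h z ^ 2 ∂P := by
        refine Finset.sum_congr rfl fun m _ => ?_
        rw [Finset.sum_congr rfl fun m' _ => key m m']
        simp
    _ = n * ∫ z, h z ^ 2 ∂P := by simp [mul_comm]

end Aux

/-- For any fixed finite measurable partition of `(0,1]` into `B` bins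
(e.g. uniform-width binning) and an i.i.d. sample `S` of size `n` from `D`, the expected
statistical bias satisfies `E_S|TCE(f_I) − ECE(f, S)| ≤ √(2 B log 2 / n)`. -/
theorem expected_statistical_bias_uwb
    (D : Measure (X × ℝ)) [IsProbabilityMeasure D]
    (hY : ∀ᵐ z ∂D, z.2 = 0 ∨ z.2 = 1)
    (f : X → ℝ) (hf : Measurable f) (hrange : ∀ x, f x ∈ Set.Icc (0 : ℝ) 1)
    {B : ℕ} (I : Fin B → Set ℝ) (hI : IsBinning I)
    (n : ℕ) (hn : 0 < n) :
    ∫ S, |TCEsum D f I - ECE f I S| ∂(Measure.pi fun _ : Fin n => D)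
      ≤ Real.sqrt (2 * B * Real.log 2 / n) := by
  classical
  have hn' : (n : ℝ) ≠ 0 := Nat.cast_ne_zero.2 hn.ne'
  have hnpos : (0 : ℝ) < n := by exact_mod_cast hn
  set q : ℝ → ℝ := fun y => max 0 (min 1 y) with hqdef
  have hqm : Measurable q := measurable_const.max (measurable_const.min measurable_id)
  have hq01 : ∀ y, 0 ≤ q y ∧ q y ≤ 1 :=
    fun y => ⟨le_max_left _ _, max_le zero_le_one (min_le_left _ _)⟩
  set g : Fin B → (X × ℝ) → ℝ :=
    fun i z => (q z.2 - f z.1) * (I i).indicator (fun _ => (1 : ℝ)) (f z.1) with hgdef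
  have hIm : ∀ i, MeasurableSet (I i) := hI.1
  have hgm : ∀ i, Measurable (g i) := fun i =>
    ((hqm.comp measurable_snd).sub (hf.comp measurable_fst)).mul
      ((measurable_const.indicator (hIm i)).comp (hf.comp measurable_fst))
  have hind01 : ∀ i u, (I i).indicator (fun _ => (1 : ℝ)) u = 0
      ∨ (I i).indicator (fun _ => (1 : ℝ)) u = 1 := by
    intro i u
    by_cases hu : u ∈ I i
    · right; simp [Set.indicator_of_mem hu]
    · left; simp [Set.indicator_of_notMem hu]
  have hqf1 : ∀ z : X × ℝ, |q z.2 - f z.1| ≤ 1 := by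
    intro z
    have h1 := hq01 z.2
    have h2 := hrange z.1
    rw [Set.mem_Icc] at h2
    exact abs_le.2 ⟨by linarith [h1.1, h2.2], by linarith [h1.2, h2.1]⟩
  have hgb : ∀ i z, |g i z| ≤ 1 := by
    intro i z
    calc |g i z| = |q z.2 - f z.1| * |(I i).indicator (fun _ => (1 : ℝ)) (f z.1)| :=
          abs_mul _ _
      _ ≤ 1 * 1 := mul_le_mul (hqf1 z)
          (by rcases hind01 i (f z.1) with h4 | h4 <;> simp [h4]) (abs_nonneg _) zero_le_one
      _ = 1 := one_mul 1
  have hbing : ∀ z : X × ℝ, (z.2 = 0 ∨ z.2 = 1) → ∀ i, binLoss f (I i) z = g i z := by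
    intro z hz i
    have hq : q z.2 = z.2 := by
      rcases hz with h | h <;> rw [hqdef] <;> simp [h] <;> norm_num
    show (z.2 - f z.1) * (I i).indicator (fun _ => (1 : ℝ)) (f z.1) = _
    rw [hgdef]
    simp only [hq]
  set π := Measure.pi fun _ : Fin n => D with hπ
  haveI : IsProbabilityMeasure π := by rw [hπ]; infer_instance
  set μ : Fin B → ℝ := fun i => ∫ z, g i z ∂D with hμ
  set A : Fin B → (Fin n → X × ℝ) → ℝ := fun i S => (1 / (n : ℝ)) * ∑ m, g i (S m) with hA
  have hgint : ∀ i, Integrable (g i) D := fun i => intOfBound (hgm i) (hgb i)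
  have habsint : ∀ i, Integrable (fun z => |g i z|) D := fun i =>
    intOfBound (hgm i).abs (C := 1) (fun z => by simpa [abs_abs] using hgb i z)
  have hμb : ∀ i, |μ i| ≤ 1 := by
    intro i
    calc |μ i| ≤ ∫ z, |g i z| ∂D := by
          simpa [Real.norm_eq_abs] using norm_integral_le_integral_norm (μ := D) (g i)
      _ ≤ ∫ _z, (1 : ℝ) ∂D := integral_mono (habsint i) (integrable_const 1) (fun z => hgb i z)
      _ = 1 := by simp
  have hAm : ∀ i, Measurable (A i) := fun i =>
    measurable_const.mul (Finset.measurable_sum _ fun m _ => (hgm i).comp (measurable_pi_apply m))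
  have hAb : ∀ i S, |A i S| ≤ 1 := by
    intro i S
    have hsum : |∑ m, g i (S m)| ≤ (n : ℝ) := by
      refine (Finset.abs_sum_le_sum_abs _ _).trans ?_
      have := Finset.sum_le_card_nsmul Finset.univ (fun m => |g i (S m)|) 1
        (fun m _ => hgb i (S m))
      simpa using this
    calc |A i S| = 1 / (n : ℝ) * |∑ m, g i (S m)| := by
          rw [hA]; rw [abs_mul, abs_of_nonneg (by positivity : (0:ℝ) ≤ 1 / (n:ℝ))]
      _ ≤ 1 / (n : ℝ) * (n : ℝ) := by
          exact mul_le_mul_of_nonneg_left hsum (by positivity)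
      _ = 1 := by field_simp
  have hT : TCEsum D f I = ∑ i, |μ i| := by
    unfold TCEsum
    refine Finset.sum_congr rfl fun i _ => ?_
    congr 1
    refine integral_congr_ae ?_
    filter_upwards [hY] with z hz
    exact hbing z hz i
  have hNS : ∀ᵐ S ∂π, ∀ m, (S m).2 = 0 ∨ (S m).2 = 1 := by
    rw [ae_all_iff]
    intro m
    have hnull : (Measure.pi fun _ : Fin n => D)
        (Function.eval m ⁻¹' {z : X × ℝ | ¬(z.2 = 0 ∨ z.2 = 1)}) = 0 :=
      Measure.pi_eval_preimage_null (μ := fun _ : Fin n => D) (ae_iff.1 hY)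
    rw [ae_iff, hπ]
    exact hnull
  have hE : ∀ᵐ S ∂π, ECE f I S = ∑ i, |A i S| := by
    filter_upwards [hNS] with S hS
    unfold ECE
    refine Finset.sum_congr rfl fun i _ => ?_
    have : ∑ m, binLoss f (I i) (S m) = ∑ m, g i (S m) :=
      Finset.sum_congr rfl fun m _ => hbing (S m) (hS m) i
    rw [hA, this]
  set V : Fin B → ℝ := fun i => ∫ z, (g i z - μ i) ^ 2 ∂D with hV
  have hVnn : ∀ i, 0 ≤ V i := fun i => integral_nonneg fun z => sq_nonneg _
  have hhm : ∀ i, Measurable (fun z : X × ℝ => g i z - μ i) :=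
    fun i => (hgm i).sub measurable_const
  have hhb : ∀ i z, |g i z - μ i| ≤ 2 := by
    intro i z
    have h1 := abs_le.1 (hgb i z)
    have h2 := abs_le.1 (hμb i)
    exact abs_le.2 ⟨by linarith [h1.1, h2.2], by linarith [h1.2, h2.1]⟩
  have hzero : ∀ i, ∫ z, (g i z - μ i) ∂D = 0 := by
    intro i
    rw [integral_sub (hgint i) (integrable_const _), integral_const]
    simp [hμ]
  have hAvar : ∀ i, ∫ S, (A i S - μ i) ^ 2 ∂π = V i / n := by
    intro i
    have hrw : (fun S : Fin n → X × ℝ => (A i S - μ i) ^ 2)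
        = fun S => (1 / (n : ℝ)) ^ 2 * (∑ m, (g i (S m) - μ i)) ^ 2 := by
      funext S
      have hAe : A i S - μ i = (1 / (n : ℝ)) * ∑ m, (g i (S m) - μ i) := by
        rw [Finset.sum_sub_distrib, Finset.sum_const, Finset.card_univ, Fintype.card_fin, nsmul_eq_mul, hA]
        field_simp
      rw [hAe, mul_pow]
    rw [hrw]
    rw [integral_const_mul, hπ,
      integral_sq_sum_pi D (hhm i) (by norm_num : (0:ℝ) ≤ 2) (hhb i) (hzero i) n]
    rw [hV]
    field_simp
  have hAμb : ∀ i (S : Fin n → X × ℝ), |A i S - μ i| ≤ 2 := by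
    intro i S
    have h1 := abs_le.1 (hAb i S)
    have h2 := abs_le.1 (hμb i)
    exact abs_le.2 ⟨by linarith [h1.1, h2.2], by linarith [h1.2, h2.1]⟩
  have hper : ∀ i, ∫ S, |A i S - μ i| ∂π ≤ Real.sqrt (V i / n) := by
    intro i
    have := abs_int_le_sqrt π (g := fun S => A i S - μ i) ((hAm i).sub measurable_const) (C := 2) (hAμb i)
    rwa [hAvar i] at this
  have hB1 : ∑ i, |μ i| ≤ (B : ℝ) := by
    have := Finset.sum_le_card_nsmul Finset.univ (fun i => |μ i|) 1 (fun i _ => hμb i)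
    simpa using this
  have hB2 : ∀ S, ∑ i, |A i S| ≤ (B : ℝ) := by
    intro S
    have := Finset.sum_le_card_nsmul Finset.univ (fun i => |A i S|) 1 (fun i _ => hAb i S)
    simpa using this
  have hint_rhs : Integrable (fun S => ∑ i, |A i S - μ i|) π :=
    integrable_finset_sum (μ := π) _ fun i _ => intOfBound ((hAm i).sub measurable_const).abs (C := 2)
      (fun S => by simpa [abs_abs] using hAμb i S)
  have hint_lhs : Integrable (fun S => abs (∑ i, |μ i| - ∑ i, |A i S|)) π := by
    refine intOfBound ((measurable_const.sub
      (Finset.measurable_sum _ fun i _ => (hAm i).abs)).abs) (C := 2 * B) (fun S => ?_)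
    rw [abs_abs]
    have h1 : abs (∑ i, |μ i|) ≤ (B : ℝ) := by
      rw [abs_of_nonneg (Finset.sum_nonneg fun i _ => abs_nonneg _)]; exact hB1
    have h2 : abs (∑ i, |A i S|) ≤ (B : ℝ) := by
      rw [abs_of_nonneg (Finset.sum_nonneg fun i _ => abs_nonneg _)]; exact hB2 S
    have h1' := abs_le.1 h1
    have h2' := abs_le.1 h2
    exact abs_le.2 ⟨by linarith [h1'.1, h2'.2], by linarith [h1'.2, h2'.1]⟩
  have hpt2 : ∀ S : Fin n → X × ℝ, abs (∑ i, |μ i| - ∑ i, |A i S|) ≤ ∑ i, |A i S - μ i| := by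
    intro S
    rw [← Finset.sum_sub_distrib]
    refine (Finset.abs_sum_le_sum_abs _ _).trans (Finset.sum_le_sum fun i _ => ?_)
    exact (abs_abs_sub_abs_le_abs_sub _ _).trans (le_of_eq (abs_sub_comm _ _))
  have hg2int : ∀ i, Integrable (fun z => g i z ^ 2) D := by
    intro i
    refine intOfBound ((hgm i).pow_const 2) (C := 1) (fun z => ?_)
    rw [abs_of_nonneg (sq_nonneg _), ← sq_abs]
    calc |g i z| ^ 2 ≤ 1 ^ 2 := pow_le_pow_left₀ (abs_nonneg _) (hgb i z) 2
      _ = 1 := one_pow 2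
  have hVle : ∀ i, V i ≤ ∫ z, g i z ^ 2 ∂D := by
    intro i
    have hexp : (fun z : X × ℝ => (g i z - μ i) ^ 2)
        = fun z => (g i z ^ 2 - (2 * μ i) * g i z) + μ i ^ 2 := by
      funext z; ring
    have hVeq : V i = ∫ z, g i z ^ 2 ∂D - (2 * μ i) * μ i + μ i ^ 2 := by
      rw [hV]
      show ∫ z, (g i z - μ i) ^ 2 ∂D = _
      have e2 : Integrable (fun z => (2 * μ i) * g i z) D := (hgint i).const_mul _
      have e1 : Integrable (fun z => g i z ^ 2 - (2 * μ i) * g i z) D := (hg2int i).sub e2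
      rw [hexp, integral_add e1 (integrable_const _),
        integral_sub (hg2int i) e2, integral_const_mul, integral_const]
      simp [hμ]
    nlinarith [sq_nonneg (μ i), hVeq]
  have hpt3 : ∀ z : X × ℝ, ∑ i, g i z ^ 2 ≤ 1 := by
    intro z
    have hrw : ∀ i, g i z ^ 2
        = (q z.2 - f z.1) ^ 2 * (I i).indicator (fun _ => (1 : ℝ)) (f z.1) := by
      intro i
      show ((q z.2 - f z.1) * (I i).indicator (fun _ => (1 : ℝ)) (f z.1)) ^ 2 = _
      rcases hind01 i (f z.1) with h | h <;> rw [mul_pow, h] <;> ring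
    have hσ : ∑ i, (I i).indicator (fun _ => (1 : ℝ)) (f z.1) ≤ 1 := by
      by_cases hx : ∃ j, f z.1 ∈ I j
      · obtain ⟨j, hj⟩ := hx
        rw [Finset.sum_eq_single j
          (fun k _ hk => Set.indicator_of_notMem
            (fun hmem => Set.disjoint_left.1 (hI.2.1 hk) hmem hj) _)
          (fun hk => absurd (Finset.mem_univ j) hk)]
        simp [Set.indicator_of_mem hj]
      · push_neg at hx
        rw [Finset.sum_eq_zero (fun k _ => Set.indicator_of_notMem (hx k) _)]
        exact zero_le_one
    have hσ0 : 0 ≤ ∑ i, (I i).indicator (fun _ => (1 : ℝ)) (f z.1) :=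
      Finset.sum_nonneg fun i _ => by rcases hind01 i (f z.1) with h | h <;> rw [h] <;> norm_num
    have hq2 : (q z.2 - f z.1) ^ 2 ≤ 1 := by
      have := hqf1 z
      nlinarith [sq_abs (q z.2 - f z.1), abs_nonneg (q z.2 - f z.1)]
    calc ∑ i, g i z ^ 2
        = (q z.2 - f z.1) ^ 2 * ∑ i, (I i).indicator (fun _ => (1 : ℝ)) (f z.1) := by
          rw [Finset.mul_sum]; exact Finset.sum_congr rfl fun i _ => hrw i
      _ ≤ 1 := by nlinarith [sq_nonneg (q z.2 - f z.1)]
  have hVsum : ∑ i, V i ≤ 1 := by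
    calc ∑ i, V i ≤ ∑ i, ∫ z, g i z ^ 2 ∂D := Finset.sum_le_sum fun i _ => hVle i
      _ = ∫ z, ∑ i, g i z ^ 2 ∂D := (integral_finset_sum _ fun i _ => hg2int i).symm
      _ ≤ ∫ _z, (1 : ℝ) ∂D :=
          integral_mono (integrable_finset_sum _ fun i _ => hg2int i) (integrable_const 1) hpt3
      _ = 1 := by simp
  have hcs : ∑ i, Real.sqrt (V i / n) ≤ Real.sqrt ((B : ℝ) * ((∑ i, V i) / n)) := by
    have h2 : (∑ i, Real.sqrt (V i / n)) ^ 2 ≤ (B : ℝ) * ∑ i, (V i / n) := by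
      have hcard := sq_sum_le_card_mul_sum_sq (s := (Finset.univ : Finset (Fin B)))
        (f := fun i => Real.sqrt (V i / n))
      have heq : ∑ i, Real.sqrt (V i / n) ^ 2 = ∑ i, (V i / n) :=
        Finset.sum_congr rfl fun i _ =>
          Real.sq_sqrt (div_nonneg (hVnn i) (Nat.cast_nonneg n))
      calc (∑ i, Real.sqrt (V i / n)) ^ 2
          ≤ (Finset.univ.card : ℝ) * ∑ i, Real.sqrt (V i / n) ^ 2 := by exact_mod_cast hcard
        _ = (B : ℝ) * ∑ i, (V i / n) := by rw [heq]; simp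
    calc ∑ i, Real.sqrt (V i / n)
        = Real.sqrt ((∑ i, Real.sqrt (V i / n)) ^ 2) :=
          (Real.sqrt_sq (Finset.sum_nonneg fun i _ => Real.sqrt_nonneg _)).symm
      _ ≤ Real.sqrt ((B : ℝ) * ∑ i, (V i / n)) := Real.sqrt_le_sqrt h2
      _ = Real.sqrt ((B : ℝ) * ((∑ i, V i) / n)) := by rw [← Finset.sum_div]
  have hfinal : (B : ℝ) * ((∑ i, V i) / n) ≤ 2 * B * Real.log 2 / n := by
    have hlog : (1 : ℝ) ≤ 2 * Real.log 2 := by nlinarith [Real.log_two_gt_d9]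
    have hBnn : (0 : ℝ) ≤ B := Nat.cast_nonneg _
    have hSnn : 0 ≤ ∑ i, V i := Finset.sum_nonneg fun i _ => hVnn i
    have h1 : (B : ℝ) * ((∑ i, V i) / n) ≤ (B : ℝ) * (1 / n) :=
      mul_le_mul_of_nonneg_left ((div_le_div_iff_of_pos_right hnpos).2 hVsum) hBnn
    have h2 : (B : ℝ) * (1 / n) ≤ 2 * B * Real.log 2 / n := by
      rw [mul_one_div]
      exact (div_le_div_iff_of_pos_right hnpos).2 (by nlinarith)
    linarith
  calc ∫ S, |TCEsum D f I - ECE f I S| ∂π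
      = ∫ S, abs (∑ i, |μ i| - ∑ i, |A i S|) ∂π := by
        refine integral_congr_ae ?_
        filter_upwards [hE] with S hS
        rw [hT, hS]
    _ ≤ ∫ S, ∑ i, |A i S - μ i| ∂π := integral_mono hint_lhs hint_rhs hpt2
    _ = ∑ i, ∫ S, |A i S - μ i| ∂π :=
        integral_finset_sum _ fun i _ => intOfBound ((hAm i).sub measurable_const).abs (C := 2)
          (fun S => by simpa [abs_abs] using hAμb i S)
    _ ≤ ∑ i, Real.sqrt (V i / n) := Finset.sum_le_sum fun i _ => hper i
    _ ≤ Real.sqrt ((B : ℝ) * ((∑ i, V i) / n)) := hcs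
    _ ≤ Real.sqrt (2 * B * Real.log 2 / n) := Real.sqrt_le_sqrt hfinal

end Calib
end
end

section
/- Let f be a measurable predictor, I a fixed finite measurable partition of (0,1] into B bins (e.g., uniform-width binning), and S an i.i.d. sample of size n from D. For any δ ∈ (0,1), with probability at least 1 − δ over S, |TCE(f_I) − ECE(f, S)| ≤ √(2 (B log 2 + log(1/δ)) / n). -/
open MeasureTheory Set

noncomputable section

namespace Calib

variable {X : Type*} [MeasurableSpace X]

section HoeffdingAux

open Real ProbabilityTheory

private lemma hoeffding_key' {p : ℝ} (x y : ℝ) :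
    p * (1 - p) * (x * y) * 4 ≤ ((1 - p) * x + p * y) ^ 2 := by
  nlinarith [sq_nonneg ((1 - p) * x - p * y)]

private lemma hoeffding_aux' {p : ℝ} (hp0 : 0 ≤ p) (hp1 : p ≤ 1) (u : ℝ) :
    (1 - p) * exp (-p * u) + p * exp ((1 - p) * u) ≤ exp (u ^ 2 / 8) := by
  rcases eq_or_lt_of_le hp0 with h0 | h0
  · simp only [← h0, sub_zero, neg_zero, zero_mul, exp_zero, one_mul, zero_mul, add_zero]
    exact one_le_exp (by positivity)
  rcases eq_or_lt_of_le hp1 with h1 | h1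
  · simp only [h1, sub_self, zero_mul, exp_zero, mul_one, one_mul, zero_add, zero_mul]
    exact one_le_exp (by positivity)
  have hq0 : 0 < 1 - p := by linarith
  set g : ℝ → ℝ := fun u => (1 - p) * exp (-p * u) + p * exp ((1 - p) * u) with hg
  have hgpos : ∀ u, 0 < g u := fun u => by positivity
  set g' : ℝ → ℝ := fun u => p * (1 - p) * (exp ((1 - p) * u) - exp (-p * u)) with hg'
  set g'' : ℝ → ℝ :=
    fun u => p * (1 - p) * ((1 - p) * exp ((1 - p) * u) + p * exp (-p * u)) with hg''
  have hda : ∀ u : ℝ, HasDerivAt (fun u : ℝ => exp (-p * u)) (exp (-p * u) * (-p)) u := by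
    intro u
    have ha : HasDerivAt (fun u : ℝ => -p * u) (-p) u := by
      simpa using (hasDerivAt_id u).const_mul (-p)
    exact ha.exp
  have hdb : ∀ u : ℝ,
      HasDerivAt (fun u : ℝ => exp ((1 - p) * u)) (exp ((1 - p) * u) * (1 - p)) u := by
    intro u
    have hb : HasDerivAt (fun u : ℝ => (1 - p) * u) (1 - p) u := by
      simpa using (hasDerivAt_id u).const_mul (1 - p)
    exact hb.exp
  have hdg : ∀ u, HasDerivAt g (g' u) u := by
    intro u
    have := ((hda u).const_mul (1 - p)).add ((hdb u).const_mul p)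
    refine this.congr_deriv ?_
    simp only [hg']; ring
  have hdg' : ∀ u, HasDerivAt g' (g'' u) u := by
    intro u
    have := ((hdb u).sub (hda u)).const_mul (p * (1 - p))
    refine this.congr_deriv ?_
    simp only [hg'']; ring
  set F : ℝ → ℝ := fun u => u ^ 2 / 8 - log (g u) with hF
  set F' : ℝ → ℝ := fun u => u / 4 - g' u / g u with hF'
  have hdF : ∀ u, HasDerivAt F (F' u) u := by
    intro u
    have hlog : HasDerivAt (fun u => log (g u)) (g' u / g u) u :=
      (hdg u).log (hgpos u).ne'
    have hsq : HasDerivAt (fun u : ℝ => u ^ 2 / 8) (u / 4) u := by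
      have := ((hasDerivAt_pow 2 u).div_const 8)
      exact this.congr_deriv (by norm_num; ring)
    exact hsq.sub hlog
  have hdF' : ∀ u, HasDerivAt F' (1 / 4 - (g'' u * g u - g' u * g' u) / (g u) ^ 2) u := by
    intro u
    have hdiv : HasDerivAt (fun u => g' u / g u)
        ((g'' u * g u - g' u * g' u) / (g u) ^ 2) u :=
      (hdg' u).div (hdg u) (hgpos u).ne'
    have hlin : HasDerivAt (fun u : ℝ => u / 4) (1 / 4) u := by
      simpa using (hasDerivAt_id u).div_const 4
    exact hlin.sub hdiv
  have hF''nonneg : ∀ u, 0 ≤ 1 / 4 - (g'' u * g u - g' u * g' u) / (g u) ^ 2 := by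
    intro u
    rw [sub_nonneg, div_le_iff₀ (by positivity)]
    have key : g'' u * g u - g' u * g' u
        = p * (1 - p) * (exp (-p * u) * exp ((1 - p) * u)) := by
      simp only [hg, hg', hg'']; ring
    rw [key]
    have h4 := hoeffding_key' (p := p) (exp (-p * u)) (exp ((1 - p) * u))
    have : ((1 - p) * exp (-p * u) + p * exp ((1 - p) * u)) ^ 2 = (g u) ^ 2 := by
      simp only [hg]
    linarith [this ▸ h4]
  have hmonoF' : Monotone F' := by
    refine monotone_of_deriv_nonneg (fun u => (hdF' u).differentiableAt) fun u => ?_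
    rw [(hdF' u).deriv]; exact hF''nonneg u
  have hF'0 : F' 0 = 0 := by
    simp only [hF', hg']
    norm_num
  have hFdiff : Differentiable ℝ F := fun u => (hdF u).differentiableAt
  have hF0 : F 0 = 0 := by
    have hg0 : g 0 = 1 := by simp only [hg]; norm_num
    simp only [hF, hg0, log_one]
    norm_num
  have hFnonneg : 0 ≤ F u := by
    rcases le_total 0 u with hu | hu
    · have hmono : MonotoneOn F (Set.Ici 0) := by
        refine monotoneOn_of_deriv_nonneg (convex_Ici 0) hFdiff.continuous.continuousOn
          hFdiff.differentiableOn fun x hx => ?_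
        rw [(hdF x).deriv, ← hF'0]
        exact hmonoF' (le_of_lt (by simpa using hx))
      have := hmono Set.self_mem_Ici (by exact hu : u ∈ Set.Ici 0) hu
      linarith [hF0 ▸ this]
    · have hanti : AntitoneOn F (Set.Iic 0) := by
        refine antitoneOn_of_deriv_nonpos (convex_Iic 0) hFdiff.continuous.continuousOn
          hFdiff.differentiableOn fun x hx => ?_
        rw [(hdF x).deriv, ← hF'0]
        exact hmonoF' (le_of_lt (by simpa using hx))
      have := hanti (by exact hu : u ∈ Set.Iic 0) Set.self_mem_Iic hu
      linarith [hF0 ▸ this]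
  have hloggle : log (g u) ≤ u ^ 2 / 8 := by simp only [hF] at hFnonneg; linarith
  calc g u = exp (log (g u)) := (exp_log (hgpos u)).symm
    _ ≤ exp (u ^ 2 / 8) := exp_le_exp.mpr hloggle

private lemma hoeffding_mgf' {Ω : Type*} [MeasurableSpace Ω] (μ : Measure Ω)
    [IsProbabilityMeasure μ]
    (X : Ω → ℝ) (hX : Measurable X) {a b : ℝ} (t : ℝ)
    (hab : ∀ᵐ ω ∂μ, X ω ∈ Set.Icc a b) (hmean : ∫ ω, X ω ∂μ = 0) :
    mgf X μ t ≤ exp (t ^ 2 * (b - a) ^ 2 / 8) := by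
  -- integrability
  have hXint : Integrable X μ := by
    refine Integrable.mono' (integrable_const (max |a| |b|)) hX.aestronglyMeasurable ?_
    filter_upwards [hab] with ω h
    rw [Real.norm_eq_abs, abs_le]
    constructor
    · calc -(max |a| |b|) ≤ -|a| := by simp
        _ ≤ a := neg_abs_le a
        _ ≤ X ω := h.1
    · calc X ω ≤ b := h.2
        _ ≤ |b| := le_abs_self b
        _ ≤ max |a| |b| := le_max_right _ _
  have ha0 : a ≤ 0 := by
    have : ∫ ω, (a : ℝ) ∂μ ≤ ∫ ω, X ω ∂μ :=
      integral_mono_ae (integrable_const a) hXint (hab.mono fun ω h => h.1)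
    simpa [hmean] using this
  have hb0 : 0 ≤ b := by
    have : ∫ ω, X ω ∂μ ≤ ∫ ω, (b : ℝ) ∂μ :=
      integral_mono_ae hXint (integrable_const b) (hab.mono fun ω h => h.2)
    simpa [hmean] using this
  rcases eq_or_lt_of_le (ha0.trans hb0) with hab0 | haltb
  · -- a = b, so a = b = 0 and X = 0 a.e.
    have ha : a = 0 := le_antisymm ha0 (by rw [hab0]; exact hb0)
    have hb : b = 0 := by rw [← hab0, ha]
    have hX0 : ∀ᵐ ω ∂μ, X ω = 0 := by
      filter_upwards [hab] with ω h
      rw [ha] at h; rw [hb] at h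
      exact le_antisymm h.2 h.1
    have heq : (fun ω => exp (t * X ω)) =ᵐ[μ] fun _ => (1 : ℝ) :=
      hX0.mono fun ω h => by simp [h]
    have : mgf X μ t = 1 := by
      rw [mgf, integral_congr_ae heq]
      simp
    rw [this]
    exact one_le_exp (by positivity)
  · -- a < b
    set p : ℝ := -a / (b - a) with hp
    have hba : 0 < b - a := by linarith
    have hp0 : 0 ≤ p := div_nonneg (by linarith) hba.le
    have hp1 : p ≤ 1 := by rw [hp, div_le_one hba]; linarith
    -- pointwise convexity bound
    have hconv : ∀ᵐ ω ∂μ, exp (t * X ω)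
        ≤ (b - X ω) / (b - a) * exp (t * a) + (X ω - a) / (b - a) * exp (t * b) := by
      filter_upwards [hab] with ω h
      have hx := h.1; have hx' := h.2
      set lam : ℝ := (b - X ω) / (b - a) with hlam
      have hlam0 : 0 ≤ lam := div_nonneg (by linarith) hba.le
      have hlam1 : lam ≤ 1 := by rw [hlam, div_le_one hba]; linarith
      have hcomb : lam * (t * a) + (1 - lam) * (t * b) = t * X ω := by
        rw [hlam]; field_simp; ring
      have h1lam0 : (0:ℝ) ≤ 1 - lam := by linarith
      have hsum : lam + (1 - lam) = 1 := by ring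
      have := convexOn_exp.2 (Set.mem_univ (t * a)) (Set.mem_univ (t * b)) hlam0 h1lam0 hsum
      rw [smul_eq_mul, smul_eq_mul, smul_eq_mul, smul_eq_mul, hcomb] at this
      have h1lam : 1 - lam = (X ω - a) / (b - a) := by rw [hlam]; field_simp; ring
      rw [h1lam] at this
      exact this
    -- integrate
    have hrhs_int : Integrable
        (fun ω => (b - X ω) / (b - a) * exp (t * a) + (X ω - a) / (b - a) * exp (t * b)) μ := by
      apply Integrable.add
      · exact (((integrable_const b).sub hXint).div_const _).mul_const _
      · exact (((hXint.sub (integrable_const a)).div_const _)).mul_const _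
    have hexp_int : Integrable (fun ω => exp (t * X ω)) μ := by
      refine Integrable.mono' (integrable_const (exp (|t| * max |a| |b|)))
        ((hX.const_mul t).exp).aestronglyMeasurable ?_
      filter_upwards [hab] with ω h
      rw [Real.norm_eq_abs, abs_exp, exp_le_exp]
      calc t * X ω ≤ |t * X ω| := le_abs_self _
        _ = |t| * |X ω| := abs_mul _ _
        _ ≤ |t| * max |a| |b| := by
            apply mul_le_mul_of_nonneg_left _ (abs_nonneg t)
            rw [abs_le]
            constructor
            · calc -(max |a| |b|) ≤ -|a| := by simp
                _ ≤ a := neg_abs_le a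
                _ ≤ X ω := h.1
            · calc X ω ≤ b := h.2
                _ ≤ |b| := le_abs_self b
                _ ≤ max |a| |b| := le_max_right _ _
    have hint : mgf X μ t ≤ (1 - p) * exp (t * a) + p * exp (t * b) := by
      rw [mgf]
      calc ∫ ω, exp (t * X ω) ∂μ
          ≤ ∫ ω, ((b - X ω) / (b - a) * exp (t * a) + (X ω - a) / (b - a) * exp (t * b)) ∂μ :=
            integral_mono_ae hexp_int hrhs_int hconv
        _ = (1 - p) * exp (t * a) + p * exp (t * b) := by
            have hre : ∀ ω, (b - X ω) / (b - a) * exp (t * a) + (X ω - a) / (b - a) * exp (t * b)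
                = ((exp (t * b) - exp (t * a)) / (b - a)) * X ω
                  + (b * exp (t * a) - a * exp (t * b)) / (b - a) := by
              intro ω; field_simp; ring
            rw [integral_congr_ae (Filter.Eventually.of_forall hre),
              integral_add (hXint.const_mul _) (integrable_const _),
              integral_const_mul, hmean, integral_const]
            simp only [measure_univ, probReal_univ, ENNReal.toReal_one, smul_eq_mul, one_mul, mul_zero, zero_add]
            rw [hp]
            field_simp
            ring
    refine hint.trans ?_
    have hta : t * a = -p * (t * (b - a)) := by rw [hp]; field_simp
    have htb : t * b = (1 - p) * (t * (b - a)) := by rw [hp]; field_simp; ring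
    rw [hta, htb]
    calc (1 - p) * exp (-p * (t * (b - a))) + p * exp ((1 - p) * (t * (b - a)))
        ≤ exp ((t * (b - a)) ^ 2 / 8) := hoeffding_aux' hp0 hp1 _
      _ = exp (t ^ 2 * (b - a) ^ 2 / 8) := by rw [mul_pow]

variable {Z : Type*} [MeasurableSpace Z]

private lemma map_eval_pi' {n : ℕ} (D : Measure Z) [IsProbabilityMeasure D] (m : Fin n) :
    Measure.map (fun S : Fin n → Z => S m) (Measure.pi fun _ => D) = D := by
  refine Measure.ext fun s hs => ?_
  rw [Measure.map_apply (measurable_pi_apply m) hs]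
  have : (fun S : Fin n → Z => S m) ⁻¹' s
      = Set.pi Set.univ (fun i => if i = m then s else Set.univ) := by
    ext S
    simp only [Set.mem_preimage, Set.mem_pi, Set.mem_univ, forall_true_left]
    constructor
    · intro h i
      by_cases hi : i = m <;> simp [hi, h]
    · intro h
      have := h m
      simpa using this
  rw [this, Measure.pi_pi]
  rw [Finset.prod_eq_single m (fun i _ hi => by simp [hi]) (by simp)]
  simp

private lemma iIndepFun_eval' {n : ℕ} (D : Measure Z) [IsProbabilityMeasure D] :
    iIndepFun
      (fun (m : Fin n) (S : Fin n → Z) => S m) (Measure.pi fun _ => D) := by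
  rw [iIndepFun_iff_measure_inter_preimage_eq_mul]
  intro s sets hsets
  classical
  have heq : (⋂ m ∈ s, (fun S : Fin n → Z => S m) ⁻¹' sets m)
      = Set.pi Set.univ (fun i => if i ∈ s then sets i else Set.univ) := by
    ext S
    simp only [Set.mem_iInter, Set.mem_preimage, Set.mem_pi, Set.mem_univ, forall_true_left]
    constructor
    · intro h i
      by_cases hi : i ∈ s <;> simp [hi, h i]
    · intro h m hm
      have := h m
      simpa [hm] using this
  rw [heq, Measure.pi_pi]
  have hprod : ∀ m ∈ s, (Measure.pi fun _ : Fin n => D) ((fun S => S m) ⁻¹' sets m)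
      = D (sets m) := fun m hm => by
    rw [← Measure.map_apply (measurable_pi_apply m) (hsets m hm), map_eval_pi']
  rw [← Finset.prod_subset (Finset.subset_univ s) (fun x _ hx => by simp [hx])]
  exact Finset.prod_congr rfl fun i hi => by rw [hprod i hi]; simp [hi]

private lemma hoeffding_tail' (D : Measure Z) [IsProbabilityMeasure D]
    (h : Z → ℝ) (hmeas : Measurable h) (hbdd : ∀ᵐ z ∂D, |h z| ≤ 1)
    (n : ℕ) (t : ℝ) (ht : 0 ≤ t) :
    ((Measure.pi fun _ : Fin n => D)
        {S | (n : ℝ) * t ≤ ∑ m, ((∫ z, h z ∂D) - h (S m))}).toReal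
      ≤ exp (-(n : ℝ) * t ^ 2 / 2) := by
  set μ := Measure.pi fun _ : Fin n => D with hμ
  set c : ℝ := ∫ z, h z ∂D with hc
  set W : Z → ℝ := fun z => c - h z with hW
  have hWmeas : Measurable W := measurable_const.sub hmeas
  have hint : Integrable h D :=
    Integrable.mono' (integrable_const 1) hmeas.aestronglyMeasurable
      (hbdd.mono fun z hz => by rwa [Real.norm_eq_abs])
  have hWmean : ∫ z, W z ∂D = 0 := by
    simp only [hW]
    rw [integral_sub (integrable_const c) hint, integral_const]
    simp [hc]
  have hWbdd : ∀ᵐ z ∂D, W z ∈ Set.Icc (c - 1) (c + 1) := by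
    filter_upwards [hbdd] with z hz
    rw [abs_le] at hz
    constructor <;> simp only [hW] <;> [linarith [hz.2]; linarith [hz.1]]
  have hmgfW : mgf W D t ≤ exp (t ^ 2 / 2) := by
    have := hoeffding_mgf' D W hWmeas t hWbdd hWmean
    calc mgf W D t ≤ exp (t ^ 2 * ((c + 1) - (c - 1)) ^ 2 / 8) := this
      _ = exp (t ^ 2 / 2) := by congr 1; ring
  -- coordinates
  have hWm_meas : ∀ m : Fin n, Measurable (fun S : Fin n → Z => W (S m)) :=
    fun m => hWmeas.comp (measurable_pi_apply m)
  have hmgf_coord : ∀ m : Fin n, mgf (fun S : Fin n → Z => W (S m)) μ t = mgf W D t := by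
    intro m
    rw [mgf, mgf, ← map_eval_pi' D m,
      integral_map (measurable_pi_apply m).aemeasurable]
    rw [map_eval_pi' D m]
    exact ((hWmeas.const_mul t).exp).aestronglyMeasurable
  have hindep : iIndepFun
      (fun m (S : Fin n → Z) => W (S m)) μ :=
    (iIndepFun_eval' D).comp (fun _ => W) (fun _ => hWmeas)
  have hmgf_sum : mgf (∑ m, fun S : Fin n → Z => W (S m)) μ t ≤ exp ((n : ℝ) * t ^ 2 / 2) := by
    rw [hindep.mgf_sum hWm_meas]
    calc ∏ m : Fin n, mgf (fun S : Fin n → Z => W (S m)) μ t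
        = ∏ _m : Fin n, mgf W D t := by
          exact Finset.prod_congr rfl fun m _ => hmgf_coord m
      _ = (mgf W D t) ^ n := by rw [Finset.prod_const, Finset.card_univ, Fintype.card_fin]
      _ ≤ (exp (t ^ 2 / 2)) ^ n := pow_le_pow_left₀ mgf_nonneg hmgfW n
      _ = exp ((n : ℝ) * t ^ 2 / 2) := by
          rw [← Real.exp_nat_mul]; ring_nf
  -- integrability of exp of the sum
  have hae : ∀ᵐ S ∂μ, ∀ m : Fin n, |W (S m)| ≤ |c| + 1 := by
    rw [MeasureTheory.ae_all_iff]
    intro m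
    have hbW : ∀ᵐ z ∂D, |W z| ≤ |c| + 1 := by
      filter_upwards [hbdd] with z hz
      calc |W z| = |c - h z| := rfl
        _ ≤ |c| + |h z| := abs_sub _ _
        _ ≤ |c| + 1 := by linarith
    exact (MeasureTheory.Measure.tendsto_eval_ae_ae (μ := fun _ : Fin n => D) (i := m)).eventually hbW
  have hsum_meas : Measurable fun S : Fin n → Z => ∑ m, W (S m) :=
    Finset.measurable_sum _ fun m _ => hWm_meas m
  have hexp_int : Integrable (fun S => exp (t * ∑ m, W (S m))) μ := by
    refine Integrable.mono' (integrable_const (exp (t * (n * (|c| + 1)))))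
      ((hsum_meas.const_mul t).exp).aestronglyMeasurable ?_
    filter_upwards [hae] with S hS
    rw [Real.norm_eq_abs, abs_exp, exp_le_exp]
    have : ∑ m, W (S m) ≤ ∑ _m : Fin n, (|c| + 1) :=
      Finset.sum_le_sum fun m _ => (le_abs_self _).trans (hS m)
    have h2 : ∑ _m : Fin n, (|c| + 1) = (n : ℝ) * (|c| + 1) := by
      rw [Finset.sum_const, Finset.card_univ, Fintype.card_fin, nsmul_eq_mul]
    calc t * ∑ m, W (S m) ≤ t * ((n : ℝ) * (|c| + 1)) := by
          apply mul_le_mul_of_nonneg_left _ ht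
          rw [← h2]; exact this
      _ = t * (n * (|c| + 1)) := rfl
  -- Chernoff
  have hsum_eq : (∑ m, fun S : Fin n → Z => W (S m)) = fun S => ∑ m, W (S m) := by
    ext S; simp
  have hchern := measure_ge_le_exp_mul_mgf (μ := μ)
    (X := fun S => ∑ m, W (S m)) ((n : ℝ) * t) ht hexp_int
  calc (μ {S | (n : ℝ) * t ≤ ∑ m, (c - h (S m))}).toReal
      ≤ exp (-t * ((n : ℝ) * t)) * mgf (fun S => ∑ m, W (S m)) μ t := hchern
    _ ≤ exp (-t * ((n : ℝ) * t)) * exp ((n : ℝ) * t ^ 2 / 2) := by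
        apply mul_le_mul_of_nonneg_left _ (exp_pos _).le
        rw [← hsum_eq]; exact hmgf_sum
    _ = exp (-(n : ℝ) * t ^ 2 / 2) := by
        rw [← Real.exp_add]; ring_nf

private lemma sum_indicator_le_one' {B : ℕ} (I : Fin B → Set ℝ)
    (hd : Pairwise (Function.onFun Disjoint I)) (v : ℝ) :
    ∑ i, (I i).indicator (fun _ => (1 : ℝ)) v ≤ 1 := by
  by_cases hv : ∃ j, v ∈ I j
  · obtain ⟨j, hj⟩ := hv
    have : ∑ i, (I i).indicator (fun _ => (1 : ℝ)) v
        = (I j).indicator (fun _ => (1 : ℝ)) v := by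
      refine Finset.sum_eq_single j (fun i _ hij => ?_) (by simp)
      have hvi : v ∉ I i := fun hvi => Set.disjoint_left.mp (hd hij) hvi hj
      exact Set.indicator_of_notMem hvi _
    rw [this, Set.indicator_of_mem hj]
  · push_neg at hv
    have : ∀ i : Fin B, (I i).indicator (fun _ => (1 : ℝ)) v = 0 :=
      fun i => Set.indicator_of_notMem (hv i) _
    simp [this]

end HoeffdingAux


/-- High-probability bound on the statistical bias: for any fixed finite
measurable partition of `(0,1]` into `B` bins and any `δ ∈ (0,1)`, with probability at
least `1 − δ` over an i.i.d. sample `S` of size `n`,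
`|TCE(f_I) − ECE(f, S)| ≤ √(2 (B log 2 + log(1/δ)) / n)`. -/
theorem high_prob_statistical_bias
    (D : Measure (X × ℝ)) [IsProbabilityMeasure D]
    (hY : ∀ᵐ z ∂D, z.2 = 0 ∨ z.2 = 1)
    (f : X → ℝ) (hf : Measurable f) (hrange : ∀ x, f x ∈ Set.Icc (0 : ℝ) 1)
    {B : ℕ} (I : Fin B → Set ℝ) (hI : IsBinning I)
    (n : ℕ) (hn : 0 < n) (δ : ℝ) (hδ : δ ∈ Set.Ioo (0 : ℝ) 1) :
    ENNReal.ofReal (1 - δ) ≤ (Measure.pi fun _ : Fin n => D)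
      {S | |TCEsum D f I - ECE f I S|
        ≤ Real.sqrt (2 * ((B : ℝ) * Real.log 2 + Real.log (1 / δ)) / n)} := by
  classical
  set Z := X × ℝ
  set μ : Measure (Fin n → Z) := Measure.pi fun _ : Fin n => D with hμdef
  set L : ℝ := (B : ℝ) * Real.log 2 + Real.log (1 / δ) with hLdef
  set t : ℝ := Real.sqrt (2 * L / n) with htdef
  obtain ⟨hδ0, hδ1⟩ := hδ
  have hn0 : (0 : ℝ) < n := by exact_mod_cast hn
  have hn0' : (n : ℝ) ≠ 0 := hn0.ne'
  have hlogδ : 0 ≤ Real.log (1 / δ) := by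
    rw [one_div, Real.log_inv]
    have : Real.log δ ≤ 0 := Real.log_nonpos hδ0.le hδ1.le
    linarith
  have hL0 : 0 ≤ L := by
    have : 0 ≤ (B : ℝ) * Real.log 2 :=
      mul_nonneg (Nat.cast_nonneg B) (Real.log_nonneg one_le_two)
    simp only [hLdef]; linarith
  have ht0 : 0 ≤ t := Real.sqrt_nonneg _
  have ht2 : t ^ 2 = 2 * L / n := Real.sq_sqrt (by positivity)
  -- measurability and boundedness of bin losses
  have hbin_meas : ∀ i : Fin B, Measurable (binLoss f (I i)) := by
    intro i
    apply Measurable.mul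
    · exact measurable_snd.sub (hf.comp measurable_fst)
    · exact (measurable_const.indicator (hI.1 i)).comp (hf.comp measurable_fst)
  have hchi01 : ∀ (i : Fin B) (v : ℝ),
      (I i).indicator (fun _ => (1 : ℝ)) v = 0 ∨ (I i).indicator (fun _ => (1 : ℝ)) v = 1 := by
    intro i v
    by_cases hv : v ∈ I i
    · right; exact Set.indicator_of_mem hv _
    · left; exact Set.indicator_of_notMem hv _
  have habs_bin : ∀ᵐ z ∂D, ∀ i : Fin B,
      |binLoss f (I i) z| = |z.2 - f z.1| * (I i).indicator (fun _ => (1 : ℝ)) (f z.1) := by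
    filter_upwards with z
    intro i
    rw [binLoss, abs_mul]
    congr 1
    rcases hchi01 i (f z.1) with h | h <;> rw [h] <;> norm_num
  have hyb : ∀ᵐ z ∂D, |z.2 - f z.1| ≤ 1 := by
    filter_upwards [hY] with z hz
    have hfz := hrange z.1
    rw [abs_le]
    rcases hz with h | h <;> rw [h] <;> constructor <;>
      [linarith [hfz.2]; linarith [hfz.1]; linarith [hfz.2]; linarith [hfz.1]]
  -- signed combinations
  set sg : (Fin B → Bool) → Fin B → ℝ := fun ε i => if ε i then 1 else -1 with hsg
  have hsg_abs : ∀ ε i, |sg ε i| = 1 := by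
    intro ε i; by_cases h : ε i <;> simp [hsg, h]
  set hε : (Fin B → Bool) → Z → ℝ :=
    fun ε z => ∑ i, sg ε i * binLoss f (I i) z with hhε
  have hhε_meas : ∀ ε, Measurable (hε ε) := by
    intro ε
    exact Finset.measurable_sum _ fun i _ => (hbin_meas i).const_mul _
  have hhε_bdd : ∀ ε, ∀ᵐ z ∂D, |hε ε z| ≤ 1 := by
    intro ε
    filter_upwards [habs_bin, hyb] with z habs hy
    calc |hε ε z| ≤ ∑ i, |sg ε i * binLoss f (I i) z| := Finset.abs_sum_le_sum_abs _ _
      _ = ∑ i, |binLoss f (I i) z| := by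
          refine Finset.sum_congr rfl fun i _ => ?_
          rw [abs_mul, hsg_abs, one_mul]
      _ = ∑ i, |z.2 - f z.1| * (I i).indicator (fun _ => (1 : ℝ)) (f z.1) := by
          exact Finset.sum_congr rfl fun i _ => habs i
      _ ≤ ∑ i, (I i).indicator (fun _ => (1 : ℝ)) (f z.1) := by
          refine Finset.sum_le_sum fun i _ => ?_
          rcases hchi01 i (f z.1) with h | h <;> rw [h] <;> simp [show |z.2 - f z.1| ≤ 1 from hy]
      _ ≤ 1 := sum_indicator_le_one' I hI.2.1 (f z.1)
  have hbin_bdd : ∀ i : Fin B, ∀ᵐ z ∂D, |binLoss f (I i) z| ≤ 1 := by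
    intro i
    filter_upwards [habs_bin, hyb] with z habs hy
    rw [habs i]
    rcases hchi01 i (f z.1) with h | h <;> rw [h] <;> simp [hy]
  have hbin_int : ∀ i : Fin B, Integrable (binLoss f (I i)) D := by
    intro i
    refine Integrable.mono' (integrable_const 1) (hbin_meas i).aestronglyMeasurable ?_
    filter_upwards [hbin_bdd i] with z hz
    rwa [Real.norm_eq_abs]
  -- the bad events
  set a : Fin B → ℝ := fun i => ∫ z, binLoss f (I i) z ∂D with hadef
  have hcε : ∀ ε, ∫ z, hε ε z ∂D = ∑ i, sg ε i * a i := by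
    intro ε
    rw [hhε]
    rw [integral_finset_sum _ fun i _ => (hbin_int i).const_mul _]
    exact Finset.sum_congr rfl fun i _ => integral_const_mul _ _
  set bad : (Fin B → Bool) → Set (Fin n → Z) :=
    fun ε => {S | (n : ℝ) * t ≤ ∑ m, ((∫ z, hε ε z ∂D) - hε ε (S m))} with hbad
  have hbad_meas : ∀ ε, MeasurableSet (bad ε) := by
    intro ε
    apply measurableSet_le measurable_const
    exact Finset.measurable_sum _ fun m _ =>
      measurable_const.sub ((hhε_meas ε).comp (measurable_pi_apply m))
  -- per-event probability
  have hexp_eq : Real.exp (-(n : ℝ) * t ^ 2 / 2) = (1 / 2) ^ B * δ := by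
    rw [ht2]
    have hnt : -(n : ℝ) * (2 * L / n) / 2 = -L := by field_simp
    rw [hnt, hLdef, neg_add, Real.exp_add]
    congr 1
    · rw [show -((B : ℝ) * Real.log 2) = (B : ℝ) * (-Real.log 2) by ring,
        Real.exp_nat_mul]
      congr 1
      rw [Real.exp_neg, Real.exp_log two_pos]
      norm_num
    · rw [one_div, Real.log_inv, neg_neg, Real.exp_log hδ0]
  have hbad_prob : ∀ ε, μ (bad ε) ≤ ENNReal.ofReal ((1 / 2) ^ B * δ) := by
    intro ε
    have := hoeffding_tail' D (hε ε) (hhε_meas ε) (hhε_bdd ε) n t ht0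
    rw [hexp_eq] at this
    rw [hμdef]
    exact (ENNReal.le_ofReal_iff_toReal_le (measure_ne_top _ _) (by positivity)).mpr this
  have hunion : μ (⋃ ε, bad ε) ≤ ENNReal.ofReal δ := by
    calc μ (⋃ ε, bad ε) ≤ ∑' ε : Fin B → Bool, μ (bad ε) := measure_iUnion_le _
      _ = ∑ ε : Fin B → Bool, μ (bad ε) := tsum_fintype _
      _ ≤ ∑ _ε : Fin B → Bool, ENNReal.ofReal ((1 / 2) ^ B * δ) :=
          Finset.sum_le_sum fun ε _ => hbad_prob ε
      _ = (2 ^ B : ℕ) * ENNReal.ofReal ((1 / 2) ^ B * δ) := by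
          rw [Finset.sum_const, Finset.card_univ, Fintype.card_fun, Fintype.card_bool,
            Fintype.card_fin, nsmul_eq_mul]
      _ = ENNReal.ofReal ((2 : ℝ) ^ B * ((1 / 2) ^ B * δ)) := by
          rw [← ENNReal.ofReal_natCast (2 ^ B), ← ENNReal.ofReal_mul (by positivity)]
          congr 1
          push_cast
          ring
      _ = ENNReal.ofReal δ := by
          congr 1
          rw [← mul_assoc, ← mul_pow]
          norm_num
  -- inclusion
  have hincl : (⋃ ε, bad ε)ᶜ ⊆
      {S | |TCEsum D f I - ECE f I S| ≤ Real.sqrt (2 * ((B : ℝ) * Real.log 2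
        + Real.log (1 / δ)) / n)} := by
    intro S hS
    simp only [Set.mem_compl_iff, Set.mem_iUnion, not_exists, hbad, Set.mem_setOf_eq,
      not_le] at hS
    set bS : Fin B → ℝ := fun i => (1 / (n : ℝ)) * ∑ m, binLoss f (I i) (S m) with hbS
    set d : Fin B → ℝ := fun i => a i - bS i with hd
    have key : ∀ ε, ∑ i, sg ε i * d i < t := by
      intro ε
      have heq : ∑ m, ((∫ z, hε ε z ∂D) - hε ε (S m)) = (n : ℝ) * ∑ i, sg ε i * d i := by
        rw [Finset.sum_sub_distrib, Finset.sum_const, Finset.card_univ, Fintype.card_fin,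
          nsmul_eq_mul, hcε]
        have hswap : ∑ m, hε ε (S m) = ∑ i, sg ε i * ∑ m, binLoss f (I i) (S m) := by
          rw [hhε]
          rw [Finset.sum_comm]
          exact Finset.sum_congr rfl fun i _ => (Finset.mul_sum _ _ _).symm
        rw [hswap, Finset.mul_sum, Finset.mul_sum, ← Finset.sum_sub_distrib]
        refine Finset.sum_congr rfl fun i _ => ?_
        simp only [hd, hbS]
        field_simp
      have := hS ε
      rw [heq] at this
      exact lt_of_mul_lt_mul_left (by linarith) hn0.le
    have habs : ∑ i, |d i| < t := by
      have := key fun i => decide (0 ≤ d i)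
      calc ∑ i, |d i| = ∑ i, sg (fun i => decide (0 ≤ d i)) i * d i := by
            refine Finset.sum_congr rfl fun i _ => ?_
            by_cases hdi : 0 ≤ d i
            · simp [hsg, hdi, abs_of_nonneg hdi]
            · push_neg at hdi
              simp [hsg, not_le.mpr hdi, abs_of_neg hdi]
        _ < t := this
    show |TCEsum D f I - ECE f I S| ≤ _
    rw [← htdef]
    have hTCE : TCEsum D f I = ∑ i, |a i| := rfl
    have hECE : ECE f I S = ∑ i, |bS i| := rfl
    rw [hTCE, hECE, ← Finset.sum_sub_distrib]
    calc |∑ i, (|a i| - |bS i|)| ≤ ∑ i, |(|a i| - |bS i|)| := Finset.abs_sum_le_sum_abs _ _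
      _ ≤ ∑ i, |d i| := Finset.sum_le_sum fun i _ => abs_abs_sub_abs_le_abs_sub _ _
      _ ≤ t := habs.le
  -- conclude
  have hcompl : μ ((⋃ ε, bad ε)ᶜ) = 1 - μ (⋃ ε, bad ε) := by
    rw [measure_compl (MeasurableSet.iUnion hbad_meas) (measure_ne_top _ _), measure_univ]
  calc ENNReal.ofReal (1 - δ) = 1 - ENNReal.ofReal δ := by
        rw [ENNReal.ofReal_sub _ hδ0.le, ENNReal.ofReal_one]
    _ ≤ 1 - μ (⋃ ε, bad ε) := tsub_le_tsub_left hunion 1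
    _ = μ ((⋃ ε, bad ε)ᶜ) := hcompl.symm
    _ ≤ _ := measure_mono hincl

end Calib
end
end

section
/- For any measurable predictor f and any finite measurable partition I of (0,1], the following two-sided bound holds: TCE(f_I) ≤ TCE(f) ≤ TCE(f_I) + E|E[Y | f(X)] − E[Y | f_I(X)]| + E|f(X) − f_I(X)|. In particular, the binning bias satisfies |TCE(f) − TCE(f_I)| ≤ E|E[Y | f(X)] − E[Y | f_I(X)]| + E|f(X) − f_I(X)|. -/
open MeasureTheory Set

noncomputable section

namespace Calib

variable {X : Type*} [MeasurableSpace X]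

/-- Auxiliary: the sigma-algebra generated by `g ∘ fst` on `X × ℝ`. -/
def sigmaOf (g : X → ℝ) : MeasurableSpace (X × ℝ) :=
  MeasurableSpace.comap (fun w : X × ℝ => g w.1) inferInstance

/-- Two-sided bound relating `TCE(f)` and `TCE(f_I)`:
`TCE(f_I) ≤ TCE(f) ≤ TCE(f_I) + E|E[Y|f(X)] − E[Y|f_I(X)]| + E|f(X) − f_I(X)|`, and in
particular the binning bias satisfies
`|TCE(f) − TCE(f_I)| ≤ E|E[Y|f(X)] − E[Y|f_I(X)]| + E|f(X) − f_I(X)|`. -/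
theorem binning_bias_two_sided
    (D : Measure (X × ℝ)) [IsProbabilityMeasure D]
    (hY : ∀ᵐ z ∂D, z.2 = 0 ∨ z.2 = 1)
    (f : X → ℝ) (hf : Measurable f) (hrange : ∀ x, f x ∈ Set.Icc (0 : ℝ) 1)
    {B : ℕ} (I : Fin B → Set ℝ) (hI : IsBinning I) :
    TCE D (binnedPred D f I) ≤ TCE D f ∧
    TCE D f ≤ TCE D (binnedPred D f I)
        + ∫ z, |condY D f z - condY D (binnedPred D f I) z| ∂D
        + ∫ z, |f z.1 - binnedPred D f I z.1| ∂D ∧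
    |TCE D f - TCE D (binnedPred D f I)|
      ≤ ∫ z, |condY D f z - condY D (binnedPred D f I) z| ∂D
        + ∫ z, |f z.1 - binnedPred D f I z.1| ∂D := by
  classical
  obtain ⟨hmeas, hdisj, hcover⟩ := hI
  set fI : X → ℝ := binnedPred D f I with hfI_def
  set φ : ℝ → ℝ :=
    fun u => ∑ i, condMean D f (I i) * (I i).indicator (fun _ => (1 : ℝ)) u with hφ_def
  have hφ_meas : Measurable φ := by
    apply Finset.measurable_sum
    intro i _
    exact (measurable_const.indicator (hmeas i)).const_mul _
  have hfIφ : fI = φ ∘ f := rfl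
  have hfI_meas : Measurable fI := hφ_meas.comp hf
  -- the two sigma-algebras
  have hm₁ : sigmaOf f ≤ (inferInstance : MeasurableSpace (X × ℝ)) :=
    (hf.comp measurable_fst).comap_le
  have hm₂ : sigmaOf fI ≤ (inferInstance : MeasurableSpace (X × ℝ)) :=
    (hfI_meas.comp measurable_fst).comap_le
  have hm₂₁ : sigmaOf fI ≤ sigmaOf f := by
    have h1 : (fun w : X × ℝ => fI w.1) = φ ∘ fun w : X × ℝ => f w.1 := rfl
    show MeasurableSpace.comap (fun w : X × ℝ => fI w.1) inferInstance ≤ _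
    rw [h1, ← MeasurableSpace.comap_comp]
    exact MeasurableSpace.comap_mono hφ_meas.comap_le
  -- integrability
  have hYint : Integrable (fun z : X × ℝ => z.2) D := by
    refine ⟨measurable_snd.aestronglyMeasurable,
      HasFiniteIntegral.of_bounded (C := 1) ?_⟩
    filter_upwards [hY] with z hz
    rcases hz with h | h <;> simp [h]
  have hfint : Integrable (fun z : X × ℝ => f z.1) D := by
    refine ⟨(hf.comp measurable_fst).aestronglyMeasurable,
      HasFiniteIntegral.of_bounded (C := 1) (ae_of_all _ fun z => ?_)⟩
    have h1 := (hrange z.1).1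
    have h2 := (hrange z.1).2
    rw [Real.norm_eq_abs, abs_le]
    constructor <;> linarith
  set E : Fin B → Set (X × ℝ) := fun i => {z : X × ℝ | f z.1 ∈ I i} with hE_def
  have hE_meas : ∀ i, MeasurableSet (E i) := fun i => (hf.comp measurable_fst) (hmeas i)
  have hfIint : Integrable (fun z : X × ℝ => fI z.1) D := by
    have h1 : (fun z : X × ℝ => fI z.1)
        = fun z => ∑ i, (E i).indicator (fun _ => condMean D f (I i)) z := by
      funext z
      show ∑ i, condMean D f (I i) * (I i).indicator (fun _ => (1 : ℝ)) (f z.1) = _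
      refine Finset.sum_congr rfl fun i _ => ?_
      by_cases h : f z.1 ∈ I i
      · rw [Set.indicator_of_mem h, Set.indicator_of_mem (show z ∈ E i from h), mul_one]
      · rw [Set.indicator_of_notMem h, Set.indicator_of_notMem (show z ∉ E i from h), mul_zero]
    rw [h1]
    exact integrable_finset_sum _ fun i _ => (integrable_const _).indicator (hE_meas i)
  -- f_I equals the bin conditional mean on each bin
  have hfI_on : ∀ i, ∀ z : X × ℝ, f z.1 ∈ I i → fI z.1 = condMean D f (I i) := by
    intro i z hz
    show ∑ j, condMean D f (I j) * (I j).indicator (fun _ => (1 : ℝ)) (f z.1) = _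
    rw [Finset.sum_eq_single i]
    · rw [Set.indicator_of_mem hz, mul_one]
    · intro j _ hji
      have hnot : f z.1 ∉ I j := fun hj => Set.disjoint_left.mp (hdisj hji) hj hz
      rw [Set.indicator_of_notMem hnot, mul_zero]
    · intro h; exact absurd (Finset.mem_univ i) h
  have hfI_zero : ∀ z : X × ℝ, (∀ i, f z.1 ∉ I i) → fI z.1 = 0 ∧ f z.1 = 0 := by
    intro z hz
    constructor
    · show ∑ j, condMean D f (I j) * (I j).indicator (fun _ => (1 : ℝ)) (f z.1) = 0
      exact Finset.sum_eq_zero fun j _ => by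
        rw [Set.indicator_of_notMem (hz j), mul_zero]
    · have hnotin : f z.1 ∉ Set.Ioc (0 : ℝ) 1 := by
        rw [← hcover]
        simpa using hz
      have h1 := (hrange z.1).1
      have h2 := (hrange z.1).2
      rw [Set.mem_Ioc] at hnotin
      push_neg at hnotin
      by_contra h
      have : 0 < f z.1 := lt_of_le_of_ne h1 (Ne.symm h)
      linarith [hnotin this]
  -- integral of f over each bin
  have hbin : ∀ i, ∫ z in E i, f z.1 ∂D = condMean D f (I i) * (D (E i)).toReal := by
    intro i
    have hnum : ∫ z, (I i).indicator (fun _ => f z.1) (f z.1) ∂D = ∫ z in E i, f z.1 ∂D := by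
      rw [← integral_indicator (hE_meas i)]
      refine integral_congr_ae (ae_of_all _ fun z => ?_)
      simp only [Set.indicator_apply, hE_def, Set.mem_setOf_eq]
    show _ = (∫ z, (I i).indicator (fun _ => f z.1) (f z.1) ∂D) / (D (E i)).toReal
        * (D (E i)).toReal
    by_cases h0 : D (E i) = 0
    · rw [setIntegral_measure_zero _ h0, h0]
      simp
    · have hpos : (D (E i)).toReal ≠ 0 := by
        simp [ENNReal.toReal_ne_zero, h0, measure_ne_top]
      rw [div_mul_cancel₀ _ hpos, hnum]
  -- f_I∘fst is (a version of) E[f∘fst | sigmaOf fI]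
  have hcondf : (fun z : X × ℝ => fI z.1) =ᵐ[D] D[fun z : X × ℝ => f z.1 | sigmaOf fI] := by
    refine ae_eq_condExp_of_forall_setIntegral_eq hm₂ hfint
      (fun s _ _ => hfIint.integrableOn) ?_ ?_
    · rintro s ⟨A, hA, rfl⟩ -
      set s : Set (X × ℝ) := (fun w : X × ℝ => fI w.1) ⁻¹' A with hs_def
      have hs_meas : MeasurableSet s := (hfI_meas.comp measurable_fst) hA
      have key : ∀ z : X × ℝ,
          f z.1 - fI z.1 = ∑ i, (E i).indicator (fun w : X × ℝ => f w.1 - fI w.1) z := by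
        intro z
        by_cases hz : ∃ i, f z.1 ∈ I i
        · obtain ⟨i, hi⟩ := hz
          rw [Finset.sum_eq_single i]
          · rw [Set.indicator_of_mem (show z ∈ E i from hi)]
          · intro j _ hji
            refine Set.indicator_of_notMem (fun hj => ?_) _
            exact Set.disjoint_left.mp (hdisj hji) hj hi
          · intro h; exact absurd (Finset.mem_univ i) h
        · push_neg at hz
          obtain ⟨h1, h2⟩ := hfI_zero z hz
          rw [h1, h2, sub_zero]
          exact (Finset.sum_eq_zero fun j _ =>
            Set.indicator_of_notMem (show z ∉ E j from hz j) _).symm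
      have hzero : ∫ z in s, (f z.1 - fI z.1) ∂D = 0 := by
        calc ∫ z in s, (f z.1 - fI z.1) ∂D
            = ∫ z in s, ∑ i, (E i).indicator (fun w : X × ℝ => f w.1 - fI w.1) z ∂D := by
              exact integral_congr_ae (ae_of_all _ fun z => key z)
          _ = ∑ i, ∫ z in s, (E i).indicator (fun w : X × ℝ => f w.1 - fI w.1) z ∂D := by
              refine integral_finset_sum _ fun i _ => ?_
              exact ((hfint.sub hfIint).indicator (hE_meas i)).integrableOn
          _ = 0 := by
              refine Finset.sum_eq_zero fun i _ => ?_
              rw [setIntegral_indicator (hE_meas i)]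
              by_cases hc : condMean D f (I i) ∈ A
              · have hseq : s ∩ E i = E i := by
                  refine Set.Subset.antisymm Set.inter_subset_right fun z hz => ⟨?_, hz⟩
                  show fI z.1 ∈ A
                  rw [hfI_on i z hz]; exact hc
                have h2 : ∫ z in E i, fI z.1 ∂D = condMean D f (I i) * (D (E i)).toReal := by
                  rw [setIntegral_congr_fun (hE_meas i)
                    (fun z hz => hfI_on i z hz), setIntegral_const, smul_eq_mul, mul_comm]; rfl
                rw [hseq, integral_sub hfint.integrableOn hfIint.integrableOn,
                  hbin i, h2, sub_self]
              · have hseq : s ∩ E i = ∅ := by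
                  refine Set.eq_empty_of_forall_notMem fun z hz => hc ?_
                  rw [← hfI_on i z hz.2]; exact hz.1
                rw [hseq]
                simp
      have hsub := integral_sub (hfint.integrableOn (s := s)) (hfIint.integrableOn (s := s))
      rw [hsub] at hzero
      linarith
    · exact (Measurable.stronglyMeasurable
        (Measurable.of_comap_le le_rfl)).aestronglyMeasurable
  -- conditional expectations
  set g₁ : X × ℝ → ℝ := condY D f with hg₁_def
  set g₂ : X × ℝ → ℝ := condY D fI with hg₂_def
  have hg₁ : g₁ = D[fun w : X × ℝ => w.2 | sigmaOf f] := rfl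
  have hg₂ : g₂ = D[fun w : X × ℝ => w.2 | sigmaOf fI] := rfl
  have hg₁int : Integrable g₁ D := by rw [hg₁]; exact integrable_condExp
  have hg₂int : Integrable g₂ D := by rw [hg₂]; exact integrable_condExp
  have htower : D[g₁ | sigmaOf fI] =ᵐ[D] g₂ := by
    rw [hg₁, hg₂]
    exact condExp_condExp_of_le hm₂₁ hm₁
  have hsub : D[g₁ - fun z : X × ℝ => f z.1 | sigmaOf fI]
      =ᵐ[D] fun z : X × ℝ => g₂ z - fI z.1 := by
    filter_upwards [condExp_sub hg₁int hfint (m := sigmaOf fI), htower, hcondf] with z h1 h2 h3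
    rw [h1, Pi.sub_apply, h2, ← h3]
  -- lower bound: TCE f_I ≤ TCE f
  have hlow : TCE D fI ≤ TCE D f := by
    have h1 : TCE D fI = ∫ z, |(D[g₁ - fun z : X × ℝ => f z.1 | sigmaOf fI]) z| ∂D := by
      refine integral_congr_ae ?_
      filter_upwards [hsub] with z hz
      rw [hz]
    have h2 : TCE D f = ∫ z, |g₁ z - f z.1| ∂D := rfl
    rw [h1, h2]
    exact integral_abs_condExp_le _
  have habs1 : (0 : ℝ) ≤ ∫ z, |g₁ z - g₂ z| ∂D := integral_nonneg fun z => abs_nonneg _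
  have habs2 : (0 : ℝ) ≤ ∫ z, |f z.1 - fI z.1| ∂D := integral_nonneg fun z => abs_nonneg _
  -- upper bound
  have hup : TCE D f ≤ TCE D fI + (∫ z, |g₁ z - g₂ z| ∂D) + ∫ z, |f z.1 - fI z.1| ∂D := by
    have hint1 : Integrable (fun z : X × ℝ => |g₁ z - g₂ z|) D := (hg₁int.sub hg₂int).abs
    have hint2 : Integrable (fun z : X × ℝ => |g₂ z - fI z.1|) D := (hg₂int.sub hfIint).abs
    have hint3 : Integrable (fun z : X × ℝ => |f z.1 - fI z.1|) D := (hfint.sub hfIint).abs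
    have hptw : ∀ z : X × ℝ,
        |g₁ z - f z.1| ≤ |g₁ z - g₂ z| + |g₂ z - fI z.1| + |f z.1 - fI z.1| := by
      intro z
      have h1 : g₁ z - f z.1 = (g₁ z - g₂ z) + (g₂ z - fI z.1) + (fI z.1 - f z.1) := by ring
      calc |g₁ z - f z.1| ≤ |g₁ z - g₂ z| + |g₂ z - fI z.1| + |fI z.1 - f z.1| := by
            rw [h1]
            exact (abs_add_le _ _).trans (add_le_add_left (abs_add_le _ _) _)
        _ = |g₁ z - g₂ z| + |g₂ z - fI z.1| + |f z.1 - fI z.1| := by rw [abs_sub_comm (fI z.1)]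
    have hTf : TCE D f = ∫ z, |g₁ z - f z.1| ∂D := rfl
    have hTfI : TCE D fI = ∫ z, |g₂ z - fI z.1| ∂D := rfl
    rw [hTf, hTfI]
    calc ∫ z, |g₁ z - f z.1| ∂D
        ≤ ∫ z, (|g₁ z - g₂ z| + |g₂ z - fI z.1| + |f z.1 - fI z.1|) ∂D := by
          refine integral_mono (hg₁int.sub hfint).abs ((hint1.add hint2).add hint3) hptw
      _ = (∫ z, |g₁ z - g₂ z| ∂D) + (∫ z, |g₂ z - fI z.1| ∂D)
            + ∫ z, |f z.1 - fI z.1| ∂D := by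
          have hint12 : Integrable (fun z : X × ℝ => |g₁ z - g₂ z| + |g₂ z - fI z.1|) D :=
            hint1.add hint2
          rw [integral_add hint12 hint3, integral_add hint1 hint2]
      _ = (∫ z, |g₂ z - fI z.1| ∂D) + (∫ z, |g₁ z - g₂ z| ∂D)
            + ∫ z, |f z.1 - fI z.1| ∂D := by ring
  refine ⟨hlow, hup, ?_⟩
  rw [abs_le]
  constructor <;> linarith

end Calib
end
end

section
/- Let f be a measurable predictor satisfying the Lipschitz assumption with constant L, and let I be the uniform-width binning with B bins. Then the binning bias satisfies |TCE(f) − TCE(f_I)| ≤ (1 + L)/B. -/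
open MeasureTheory Set

noncomputable section

namespace Calib

variable {X : Type*} [MeasurableSpace X]

lemma measurable_comap_of_finrange {Z : Type*} (T : Z → ℝ)
    (S : Finset ℝ) (hTS : ∀ z, T z ∈ S) (ψ : ℝ → ℝ) :
    Measurable[MeasurableSpace.comap T inferInstance] (fun z => ψ (T z)) := by
  intro C _
  refine ⟨(S : Set ℝ) ∩ ψ ⁻¹' C, ((S.finite_toSet.inter_of_left _)).measurableSet, ?_⟩
  ext z; simp [hTS z]

lemma condexp_comap_eq_avg {Z : Type*} [m0 : MeasurableSpace Z] (μ : Measure Z)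
    [IsProbabilityMeasure μ] (T : Z → ℝ) (hT : Measurable T)
    (S : Finset ℝ) (hTS : ∀ z, T z ∈ S) (h : Z → ℝ) (hh : Integrable h μ) :
    (μ[h | MeasurableSpace.comap T inferInstance]) =ᵐ[μ]
      fun z => (∫ w in T ⁻¹' {T z}, h w ∂μ) / (μ (T ⁻¹' {T z})).toReal := by
  set ψ : ℝ → ℝ := fun v => (∫ w in T ⁻¹' {v}, h w ∂μ) / (μ (T ⁻¹' {v})).toReal with hψ
  have hm : MeasurableSpace.comap T inferInstance ≤ m0 := hT.comap_le
  have hφm : Measurable[MeasurableSpace.comap T inferInstance] (fun z => ψ (T z)) :=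
    Calib.measurable_comap_of_finrange T S hTS ψ
  have hφm0 : Measurable (fun z => ψ (T z)) := hφm.mono hm le_rfl
  have hbound : ∀ z, |ψ (T z)| ≤ ∑ v ∈ S, |ψ v| := by
    intro z
    exact Finset.single_le_sum (f := fun v => |ψ v|) (fun v _ => abs_nonneg _) (hTS z)
  have hφint : Integrable (fun z => ψ (T z)) μ := by
    refine Integrable.mono' (g := fun _ => ∑ v ∈ S, |ψ v|) (integrable_const _)
      hφm0.aestronglyMeasurable (Filter.Eventually.of_forall hbound)
  have hkey : ∀ v : ℝ, ψ v * (μ (T ⁻¹' {v})).toReal = ∫ w in T ⁻¹' {v}, h w ∂μ := by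
    intro v
    by_cases hv : μ (T ⁻¹' {v}) = 0
    · simp [hψ, hv, Measure.restrict_eq_zero.mpr hv]
    · exact div_mul_cancel₀ _ (by
        simp [ENNReal.toReal_ne_zero, hv, (measure_lt_top μ _).ne])
  refine (ae_eq_condExp_of_forall_setIntegral_eq hm hh ?_ ?_ ?_).symm
  · intro s _ hμs
    refine Integrable.mono' (g := fun _ => ∑ v ∈ S, |ψ v|) ?_
      (hφm0.aestronglyMeasurable.restrict) (Filter.Eventually.of_forall (fun z => hbound z))
    exact integrableOn_const hμs.ne
  · rintro s ⟨A, hA, rfl⟩ hμs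
    classical
    have hsets : T ⁻¹' A = ⋃ v ∈ S.filter (· ∈ A), T ⁻¹' {v} := by
      ext z
      simp only [Set.mem_preimage, Set.mem_iUnion, Finset.mem_filter, Set.mem_singleton_iff]
      constructor
      · intro hz; exact ⟨T z, ⟨⟨hTS z, hz⟩, rfl⟩⟩
      · rintro ⟨v, ⟨⟨-, hv⟩, rfl⟩⟩; exact hv
    have hmeasv : ∀ v : ℝ, MeasurableSet (T ⁻¹' {v}) := fun v => hT (measurableSet_singleton v)
    have hdisj : Set.Pairwise ↑(S.filter (· ∈ A))
        (Function.onFun Disjoint (fun v => T ⁻¹' {v})) := by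
      intro u _ v _ huv
      exact Set.disjoint_left.mpr (by rintro z (rfl : T z = u) (rfl : T z = v); exact huv rfl)
    rw [hsets, integral_biUnion_finset _ (fun v _ => hmeasv v) hdisj
        (fun v _ => hφint.integrableOn), integral_biUnion_finset _ (fun v _ => hmeasv v) hdisj
        (fun v _ => hh.integrableOn)]
    refine Finset.sum_congr rfl (fun v _ => ?_)
    rw [setIntegral_congr_fun (hmeasv v) (g := fun _ => ψ v)
        (fun w hw => by rw [Set.mem_preimage, Set.mem_singleton_iff] at hw; rw [hw]),
      setIntegral_const, smul_eq_mul, mul_comm, measureReal_def, hkey v]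
  · exact hφm.stronglyMeasurable.aestronglyMeasurable

lemma sandwich_int {Z : Type*} [MeasurableSpace Z] (μ : Measure Z) {A S N : Set Z}
    (h1 : A ⊆ S) (h2 : S ⊆ A ∪ N) (hN : μ N = 0) (h : Z → ℝ) :
    μ S = μ A ∧ ∫ z in S, h z ∂μ = ∫ z in A, h z ∂μ := by
  have hae : S =ᵐ[μ] A := by
    rw [MeasureTheory.ae_eq_set]
    constructor
    · exact measure_mono_null (fun z hz => ((h2 hz.1).resolve_left hz.2)) hN
    · rw [Set.diff_eq_empty.mpr h1]; exact measure_empty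
  exact ⟨measure_congr hae, setIntegral_congr_set hae⟩

lemma avg_mem_Icc {Z : Type*} [MeasurableSpace Z] {μ : Measure Z} {A : Set Z}
    (hAm : MeasurableSet A) (hA : μ A ≠ 0) (hAfin : μ A ≠ ⊤) {h : Z → ℝ}
    (hint : IntegrableOn h A μ) {a b : ℝ} (hab : ∀ z ∈ A, h z ∈ Set.Icc a b) :
    (∫ z in A, h z ∂μ) / (μ A).toReal ∈ Set.Icc a b := by
  have hpos : 0 < (μ A).toReal := ENNReal.toReal_pos hA hAfin
  have hup : ∫ z in A, h z ∂μ ≤ b * (μ A).toReal := by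
    have := setIntegral_mono_on hint (integrableOn_const hAfin) hAm
      (fun z hz => (hab z hz).2)
    rwa [setIntegral_const, smul_eq_mul, mul_comm, measureReal_def] at this
  have hlo : a * (μ A).toReal ≤ ∫ z in A, h z ∂μ := by
    have := setIntegral_mono_on (integrableOn_const hAfin) hint hAm
      (fun z hz => (hab z hz).1)
    rwa [setIntegral_const, smul_eq_mul, mul_comm, measureReal_def] at this
  constructor
  · rw [le_div_iff₀ hpos]; linarith
  · rw [div_le_iff₀ hpos]; linarith

lemma uwb_disjoint {B : ℕ} {i j : Fin B} (hij : i ≠ j) : Disjoint (uwb B i) (uwb B j) := by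
  rcases lt_or_gt_of_ne (fun h : (i:ℕ) = (j:ℕ) => hij (Fin.ext h)) with h | h
  all_goals {
    refine Set.disjoint_left.mpr (fun u hu hv => ?_)
    have hB : (0:ℝ) < B := by exact_mod_cast i.pos
    first
    | exact absurd (hu.2.trans (by
        rw [div_le_div_iff_of_pos_right hB]; exact_mod_cast Nat.succ_le_of_lt h))
        (not_le.mpr hv.1)
    | exact absurd (hv.2.trans (by
        rw [div_le_div_iff_of_pos_right hB]; exact_mod_cast Nat.succ_le_of_lt h))
        (not_le.mpr hu.1) }

lemma uwb_mem {B : ℕ} (hB : 1 ≤ B) {u : ℝ} (hu : u ∈ Set.Ioc (0:ℝ) 1) :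
    ∃ i : Fin B, u ∈ uwb B i := by
  have hBpos : (0:ℝ) < B := by exact_mod_cast hB
  have hub : 0 < u * B := mul_pos hu.1 hBpos
  have hk1 : 1 ≤ ⌈u * B⌉₊ := Nat.one_le_ceil_iff.mpr hub
  have hkB : ⌈u * B⌉₊ ≤ B := Nat.ceil_le.mpr (by
    calc u * B ≤ 1 * B := by nlinarith [hu.2]
    _ = (B:ℝ) := one_mul _)
  refine ⟨⟨⌈u * B⌉₊ - 1, by omega⟩, ?_, ?_⟩
  · rw [div_lt_iff₀ hBpos]
    have := Nat.ceil_lt_add_one (le_of_lt hub)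
    push_cast [Nat.cast_sub hk1]
    linarith
  · rw [le_div_iff₀ hBpos]
    have := Nat.le_ceil (u * B)
    push_cast [Nat.cast_sub hk1]
    linarith

lemma zero_not_mem_uwb {B : ℕ} (i : Fin B) : (0:ℝ) ∉ uwb B i := by
  intro h
  exact absurd h.1 (not_lt.mpr (by positivity))

lemma uwb_width {B : ℕ} (hB : 1 ≤ B) {i : Fin B} {u v : ℝ}
    (hu : u ∈ Set.Icc ((i:ℝ)/B) (((i:ℝ)+1)/B)) (hv : v ∈ Set.Icc ((i:ℝ)/B) (((i:ℝ)+1)/B)) :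
    |u - v| ≤ 1 / B := by
  have hBpos : (0:ℝ) < B := by exact_mod_cast hB
  have hw : ((i:ℝ)+1)/B - (i:ℝ)/B = 1/B := by field_simp; ring
  rw [abs_le]
  exact ⟨by nlinarith [hu.1, hv.2], by nlinarith [hu.2, hv.1]⟩

lemma binnedPred_eq_of_mem (D : Measure (X × ℝ)) (f : X → ℝ) {B : ℕ} {i : Fin B} {x : X}
    (hx : f x ∈ uwb B i) : binnedPred D f (uwb B) x = condMean D f (uwb B i) := by
  unfold binnedPred
  rw [Finset.sum_eq_single i]
  · rw [Set.indicator_of_mem hx, mul_one]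
  · intro j _ hji
    rw [Set.indicator_of_notMem
      (fun hmem => Set.disjoint_left.mp (uwb_disjoint hji) hmem hx), mul_zero]
  · simp

lemma binnedPred_eq_zero (D : Measure (X × ℝ)) (f : X → ℝ) {B : ℕ} {x : X}
    (hx : f x = 0) : binnedPred D f (uwb B) x = 0 := by
  unfold binnedPred
  refine Finset.sum_eq_zero (fun i _ => ?_)
  rw [hx, Set.indicator_of_notMem (zero_not_mem_uwb i), mul_zero]

lemma fint {D : Measure (X × ℝ)} [IsProbabilityMeasure D] {f : X → ℝ}
    (hf : Measurable f) (hrange : ∀ x, f x ∈ Set.Icc (0:ℝ) 1) :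
    Integrable (fun z : X × ℝ => f z.1) D := by
  refine Integrable.mono' (g := fun _ => 1) (integrable_const _)
    ((hf.comp measurable_fst).aestronglyMeasurable) (Filter.Eventually.of_forall ?_)
  intro z
  rw [Real.norm_eq_abs, abs_of_nonneg (hrange z.1).1]
  exact (hrange z.1).2

lemma condMean_num {D : Measure (X × ℝ)} {f : X → ℝ}
    (hf : Measurable f) {I : Set ℝ} (hI : MeasurableSet I) :
    (∫ z, I.indicator (fun _ => f z.1) (f z.1) ∂D)
      = ∫ z in {z : X × ℝ | f z.1 ∈ I}, f z.1 ∂D := by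
  rw [← integral_indicator (by exact (hf.comp measurable_fst) hI)]
  rfl

lemma condMean_mem {D : Measure (X × ℝ)} [IsProbabilityMeasure D] {f : X → ℝ}
    (hf : Measurable f) (hrange : ∀ x, f x ∈ Set.Icc (0:ℝ) 1)
    {B : ℕ} {i : Fin B} (hA : D {z : X × ℝ | f z.1 ∈ uwb B i} ≠ 0) :
    condMean D f (uwb B i) ∈ Set.Ioc ((i:ℝ)/B) (((i:ℝ)+1)/B) := by
  set A : Set (X × ℝ) := {z : X × ℝ | f z.1 ∈ uwb B i} with hAdef
  have hAm : MeasurableSet A := (hf.comp measurable_fst) measurableSet_Ioc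
  have hpos : 0 < (D A).toReal :=
    ENNReal.toReal_pos hA (measure_lt_top D A).ne
  have hnum : condMean D f (uwb B i) = (∫ z in A, f z.1 ∂D) / (D A).toReal := by
    rw [condMean, condMean_num hf (I := uwb B i) measurableSet_Ioc]
  constructor
  · rw [hnum, lt_div_iff₀ hpos]
    have hgt : 0 < ∫ z in A, (f z.1 - (i:ℝ)/B) ∂D := by
      rw [integral_pos_iff_support_of_nonneg_ae]
      · calc (0:ENNReal) < D A := lt_of_le_of_ne (by simp) (Ne.symm hA)
          _ = D.restrict A A := (Measure.restrict_apply_self D A).symm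
          _ ≤ D.restrict A (Function.support fun z => f z.1 - (i:ℝ)/B) :=
              measure_mono (fun z hz => ne_of_gt (sub_pos.mpr hz.1))
      · refine (ae_restrict_iff' hAm).mpr (Filter.Eventually.of_forall ?_)
        intro z hz
        have h2 : (i:ℝ)/B < f z.1 := hz.1
        simp only [Pi.zero_apply]
        linarith
      · exact ((fint hf hrange).sub (integrable_const _)).integrableOn
    rw [integral_sub ((fint hf hrange).integrableOn)
      (integrableOn_const (C := (i:ℝ)/B) (measure_lt_top D A).ne),
      setIntegral_const, smul_eq_mul, measureReal_def] at hgt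
    linarith
  · rw [hnum, div_le_iff₀ hpos]
    have hle : ∫ z in A, f z.1 ∂D ≤ ∫ z in A, (((i:ℝ)+1)/B) ∂D := by
      refine setIntegral_mono_on ((fint hf hrange).integrableOn)
        (integrableOn_const (measure_lt_top D A).ne) hAm ?_
      intro z hz
      exact hz.2
    rw [setIntegral_const, smul_eq_mul, measureReal_def] at hle
    linarith

/-- Under the Lipschitz assumption with constant `L`, the binning bias of
uniform-width binning with `B` bins satisfies `|TCE(f) − TCE(f_I)| ≤ (1 + L)/B`. -/
theorem binning_bias_uwb
    (D : Measure (X × ℝ)) [IsProbabilityMeasure D]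
    (hY : ∀ᵐ z ∂D, z.2 = 0 ∨ z.2 = 1)
    (f : X → ℝ) (hf : Measurable f) (hrange : ∀ x, f x ∈ Set.Icc (0 : ℝ) 1)
    (L : ℝ) (hL : 0 ≤ L) (hlip : LipCalib D f L)
    (B : ℕ) (hB : 1 ≤ B) :
    |TCE D f - TCE D (binnedPred D f (uwb B))| ≤ (1 + L) / B := by
  classical
  obtain ⟨g, hg01, hglip, hgae⟩ := hlip
  have hBpos : (0:ℝ) < B := by exact_mod_cast hB
  set fI : X → ℝ := binnedPred D f (uwb B) with hfIdef
  set T : X × ℝ → ℝ := fun z => fI z.1 with hTdef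
  set c : Fin B → ℝ := fun i => condMean D f (uwb B i) with hcdef
  set A : Fin B → Set (X × ℝ) := fun i => {z | f z.1 ∈ uwb B i} with hAdef
  set A0 : Set (X × ℝ) := {z | f z.1 = 0} with hA0def
  have hfIm : Measurable fI := by
    rw [hfIdef]
    unfold binnedPred
    exact Finset.measurable_sum _ (fun i _ =>
      ((measurable_const.indicator measurableSet_Ioc).comp hf).const_mul _)
  have hTm : Measurable T := hfIm.comp measurable_fst
  have hAm : ∀ i, MeasurableSet (A i) := fun i => (hf.comp measurable_fst) measurableSet_Ioc
  have hA0m : MeasurableSet A0 := (hf.comp measurable_fst) (measurableSet_singleton 0)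
  have hclass : ∀ x : X, (f x = 0 ∧ fI x = 0) ∨ ∃ i, f x ∈ uwb B i ∧ fI x = c i := by
    intro x
    by_cases h0 : f x = 0
    · exact Or.inl ⟨h0, binnedPred_eq_zero D f h0⟩
    · obtain ⟨i, hi⟩ := uwb_mem hB ⟨lt_of_le_of_ne (hrange x).1 (Ne.symm h0), (hrange x).2⟩
      exact Or.inr ⟨i, hi, binnedPred_eq_of_mem D f hi⟩
  have hcup : ∀ i : Fin B, ((i:ℝ)+1)/B ≤ 1 := by
    intro i
    rw [div_le_one hBpos]
    exact_mod_cast Nat.succ_le_of_lt i.2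
  have hc01 : ∀ i : Fin B, c i ∈ Set.Icc (0:ℝ) 1 := by
    intro i
    by_cases hnull : D (A i) = 0
    · have : c i = 0 := by
        rw [hcdef]
        simp only [condMean]
        rw [show ({z : X × ℝ | f z.1 ∈ uwb B i}) = A i from rfl, hnull]
        simp
      rw [this]; exact ⟨le_refl 0, zero_le_one⟩
    · have hmem := condMean_mem hf hrange (i := i) hnull
      exact ⟨le_of_lt (lt_of_le_of_lt (by positivity) hmem.1), hmem.2.trans (hcup i)⟩
  have hTbound : ∀ z : X × ℝ, T z ∈ Set.Icc (0:ℝ) 1 := by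
    intro z
    rcases hclass z.1 with ⟨-, h2⟩ | ⟨i, -, h2⟩
    · show fI z.1 ∈ _; rw [h2]; exact ⟨le_refl 0, zero_le_one⟩
    · show fI z.1 ∈ _; rw [h2]; exact hc01 i
  have hTS : ∀ z, T z ∈ insert (0:ℝ) (Finset.image c Finset.univ) := by
    intro z
    rcases hclass z.1 with ⟨-, h2⟩ | ⟨i, -, h2⟩
    · show fI z.1 ∈ _; rw [h2]; exact Finset.mem_insert_self _ _
    · show fI z.1 ∈ _; rw [h2]
      exact Finset.mem_insert_of_mem (Finset.mem_image_of_mem c (Finset.mem_univ i))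
  have hgcont : ContinuousOn g (Set.Icc 0 1) := by
    have hlipOn : LipschitzOnWith (Real.toNNReal L) g (Set.Icc 0 1) := by
      rw [lipschitzOnWith_iff_dist_le_mul]
      intro x hx y hy
      rw [Real.dist_eq, Real.dist_eq, Real.coe_toNNReal L hL]
      exact hglip x hx y hy
    exact hlipOn.continuousOn
  have hgFm : Measurable (fun z : X × ℝ => g (f z.1)) := by
    have hrcont : Continuous (fun u : ℝ => max 0 (min u 1)) :=
      continuous_const.max (continuous_id.min continuous_const)
    have hrmem : ∀ u : ℝ, max 0 (min u 1) ∈ Set.Icc (0:ℝ) 1 :=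
      fun u => ⟨le_max_left _ _, max_le zero_le_one (min_le_right _ _)⟩
    have hgr : Continuous (fun u : ℝ => g (max 0 (min u 1))) :=
      hgcont.comp_continuous hrcont hrmem
    have heq : (fun z : X × ℝ => g (f z.1)) = fun z => g (max 0 (min (f z.1) 1)) := by
      funext z
      rw [min_eq_left (hrange z.1).2, max_eq_right (hrange z.1).1]
    rw [heq]
    exact hgr.measurable.comp (hf.comp measurable_fst)
  have hFint : Integrable (fun z : X × ℝ => f z.1) D := fint hf hrange
  have hgFint : Integrable (fun z : X × ℝ => g (f z.1)) D := by
    refine Integrable.mono' (g := fun _ => 1) (integrable_const _)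
      hgFm.aestronglyMeasurable (Filter.Eventually.of_forall (fun z => ?_))
    rw [Real.norm_eq_abs, abs_of_nonneg (hg01 _ (hrange z.1)).1]
    exact (hg01 _ (hrange z.1)).2
  have hm_f : MeasurableSpace.comap (fun z : X × ℝ => f z.1) inferInstance ≤
      (inferInstance : MeasurableSpace (X × ℝ)) :=
    Measurable.comap_le (show Measurable (fun z : X × ℝ => f z.1) from hf.comp measurable_fst)
  have hstep : T = (fun u : ℝ => ∑ i, condMean D f (uwb B i) *
      (uwb B i).indicator (fun _ => (1:ℝ)) u) ∘ (fun z : X × ℝ => f z.1) := by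
    funext z; rfl
  have hm_bf : MeasurableSpace.comap T inferInstance ≤
      MeasurableSpace.comap (fun z : X × ℝ => f z.1) inferInstance := by
    rw [hstep, ← MeasurableSpace.comap_comp]
    refine MeasurableSpace.comap_mono ?_
    exact Measurable.comap_le (Finset.measurable_sum _ (fun i _ =>
      (measurable_const.indicator measurableSet_Ioc).const_mul _))
  have hgae' : D[(fun z : X × ℝ => z.2) | MeasurableSpace.comap (fun z : X × ℝ => f z.1)
      inferInstance] =ᵐ[D] fun z => g (f z.1) := hgae
  set φ : X × ℝ → ℝ := fun z =>
    (∫ w in T ⁻¹' {T z}, g (f w.1) ∂D) / (D (T ⁻¹' {T z})).toReal with hφdef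
  have hq : condY D fI =ᵐ[D] φ := by
    have h1 : D[(fun z : X × ℝ => z.2) | MeasurableSpace.comap T inferInstance] =ᵐ[D]
        D[(fun z : X × ℝ => g (f z.1)) | MeasurableSpace.comap T inferInstance] :=
      (condExp_condExp_of_le hm_bf hm_f).symm.trans (condExp_congr_ae hgae')
    have h2 := Calib.condexp_comap_eq_avg D T hTm _ hTS _ hgFint
    exact h1.trans h2
  have hnullA : ∀ᵐ z ∂D, ∀ i : Fin B, D (A i) = 0 → z ∉ A i := by
    rw [MeasureTheory.ae_all_iff]
    intro i
    by_cases hi : D (A i) = 0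
    · filter_upwards [measure_eq_zero_iff_ae_notMem.mp hi] with z hz
      exact fun _ => hz
    · exact Filter.Eventually.of_forall (fun z h => absurd h hi)
  have hnullA0 : ∀ᵐ z ∂D, D A0 = 0 → z ∉ A0 := by
    by_cases h0 : D A0 = 0
    · filter_upwards [measure_eq_zero_iff_ae_notMem.mp h0] with z hz; exact fun _ => hz
    · exact Filter.Eventually.of_forall (fun z h => absurd h h0)
  have hNnull : D (⋃ i ∈ {i : Fin B | D (A i) = 0}, A i) = 0 :=
    (measure_biUnion_null_iff (Set.to_countable _)).mpr (fun i hi => hi)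
  have hstruct : ∀ᵐ z ∂D, |g (f z.1) - φ z| ≤ L / B ∧ |f z.1 - T z| ≤ 1 / B := by
    filter_upwards [hnullA, hnullA0] with z hz1 hz2
    rcases hclass z.1 with ⟨h0, hI0⟩ | ⟨i, hfi, hI⟩
    · -- f z.1 = 0
      have hTz : T z = 0 := hI0
      have hzA0 : z ∈ A0 := h0
      have hA0pos : D A0 ≠ 0 := fun h => (hz2 h) hzA0
      have hsub1 : A0 ⊆ T ⁻¹' {(0:ℝ)} := by
        intro w hw
        have : fI w.1 = 0 := binnedPred_eq_zero D f hw
        simpa using this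
      have hsub2 : T ⁻¹' {(0:ℝ)} ⊆ A0 ∪ ⋃ j ∈ {j : Fin B | D (A j) = 0}, A j := by
        intro w hw
        rw [Set.mem_preimage, Set.mem_singleton_iff] at hw
        rcases hclass w.1 with ⟨hw0, -⟩ | ⟨j, hwj, hwI⟩
        · exact Or.inl hw0
        · right
          have hcj : c j = 0 := by rw [← hwI]; exact hw
          have hnull : D (A j) = 0 := by
            by_contra hne
            have hmem : (j:ℝ)/B < c j := (condMean_mem hf hrange (i := j) hne).1
            rw [hcj] at hmem
            exact absurd hmem (not_lt.mpr (by positivity))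
          exact Set.mem_biUnion hnull hwj
      obtain ⟨hmeq, hieq⟩ := Calib.sandwich_int D hsub1 hsub2 hNnull (fun w => g (f w.1))
      have hφz : φ z = g 0 := by
        rw [hφdef]
        simp only
        rw [hTz, hieq, hmeq,
          setIntegral_congr_fun hA0m (g := fun _ => g 0) (fun w hw => by
            show g (f w.1) = g 0; rw [show f w.1 = 0 from hw]),
          setIntegral_const, smul_eq_mul, measureReal_def, mul_comm, mul_div_assoc, div_self
            (by simp [ENNReal.toReal_ne_zero, hA0pos, (measure_lt_top D A0).ne]), mul_one]
      constructor
      · rw [hφz, h0, sub_self, abs_zero]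
        positivity
      · rw [hTz, h0, sub_self, abs_zero]
        positivity
    · -- f z.1 ∈ uwb B i
      have hTz : T z = c i := hI
      have hzi : z ∈ A i := hfi
      have hDi : D (A i) ≠ 0 := fun h => (hz1 i h) hzi
      have hci : c i ∈ Set.Ioc ((i:ℝ)/B) (((i:ℝ)+1)/B) := condMean_mem hf hrange (i := i) hDi
      have hwidth : |f z.1 - T z| ≤ 1 / B := by
        rw [hTz]
        exact uwb_width hB ⟨le_of_lt hfi.1, hfi.2⟩ ⟨le_of_lt hci.1, hci.2⟩
      refine ⟨?_, hwidth⟩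
      have hsub1 : A i ⊆ T ⁻¹' {c i} := fun w hw => by
        simpa using binnedPred_eq_of_mem D f hw
      have hsub2 : T ⁻¹' {c i} ⊆ A i ∪ ⋃ j ∈ {j : Fin B | D (A j) = 0}, A j := by
        intro w hw
        rw [Set.mem_preimage, Set.mem_singleton_iff] at hw
        rcases hclass w.1 with ⟨-, hw0⟩ | ⟨j, hwj, hwI⟩
        · exfalso
          have hpos : (0:ℝ) < c i := lt_of_le_of_lt (by positivity) hci.1
          have : T w = 0 := hw0
          rw [hw] at this
          exact absurd this (ne_of_gt hpos)
        · by_cases hji : j = i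
          · subst hji; exact Or.inl hwj
          · right
            have hcji : c j = c i := by rw [← hwI]; exact hw
            have hnull : D (A j) = 0 := by
              by_contra hne
              have hcj : c j ∈ uwb B j := condMean_mem hf hrange (i := j) hne
              rw [hcji] at hcj
              exact Set.disjoint_left.mp (uwb_disjoint hji) hcj hci
            exact Set.mem_biUnion hnull hwj
      obtain ⟨hmeq, hieq⟩ := Calib.sandwich_int D hsub1 hsub2 hNnull (fun w => g (f w.1))
      have havg : (∫ w in A i, g (f w.1) ∂D) / (D (A i)).toReal ∈
          Set.Icc (g (f z.1) - L/B) (g (f z.1) + L/B) := by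
        refine Calib.avg_mem_Icc (hAm i) hDi (measure_lt_top D _).ne
          hgFint.integrableOn (fun w hw => ?_)
        have hd : |g (f z.1) - g (f w.1)| ≤ L / B := by
          calc |g (f z.1) - g (f w.1)| ≤ L * |f z.1 - f w.1| :=
                hglip _ (hrange z.1) _ (hrange w.1)
            _ ≤ L * (1 / B) := by
                refine mul_le_mul_of_nonneg_left ?_ hL
                exact uwb_width hB ⟨le_of_lt hfi.1, hfi.2⟩ ⟨le_of_lt hw.1, hw.2⟩
            _ = L / B := by ring
        rw [abs_le] at hd
        exact ⟨by linarith [hd.2], by linarith [hd.1]⟩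
      have hφz : φ z = (∫ w in A i, g (f w.1) ∂D) / (D (A i)).toReal := by
        rw [hφdef]
        simp only
        rw [hTz, hieq, hmeq]
      rw [hφz, abs_le]
      exact ⟨by linarith [havg.2], by linarith [havg.1]⟩
  -- final computation
  have e1 : TCE D f = ∫ z, |g (f z.1) - f z.1| ∂D := by
    rw [TCE]
    exact integral_congr_ae (hgae.mono (fun z hz => by simp only [hz]))
  set q : X × ℝ → ℝ := condY D fI with hqdef
  have e2 : TCE D fI = ∫ z, |q z - T z| ∂D := rfl
  have hqint : Integrable q D := integrable_condExp
  have hTint : Integrable T D := by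
    refine Integrable.mono' (g := fun _ => 1) (integrable_const _)
      hTm.aestronglyMeasurable (Filter.Eventually.of_forall (fun z => ?_))
    rw [Real.norm_eq_abs, abs_of_nonneg (hTbound z).1]
    exact (hTbound z).2
  have hu : Integrable (fun z => |g (f z.1) - f z.1|) D := (hgFint.sub hFint).abs
  have hv : Integrable (fun z => |q z - T z|) D := (hqint.sub hTint).abs
  have haebd : ∀ᵐ z ∂D, |(|g (f z.1) - f z.1|) - (|q z - T z|)| ≤ (1 + L)/B := by
    filter_upwards [hstruct, hq] with z hz12 hz3
    obtain ⟨hz1, hz2⟩ := hz12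
    have h5 : (g (f z.1) - f z.1) - (q z - T z) = (g (f z.1) - φ z) + -(f z.1 - T z) := by
      rw [hz3]; ring
    calc |(|g (f z.1) - f z.1|) - (|q z - T z|)|
        ≤ |(g (f z.1) - f z.1) - (q z - T z)| := abs_abs_sub_abs_le_abs_sub _ _
      _ = |(g (f z.1) - φ z) + -(f z.1 - T z)| := by rw [h5]
      _ ≤ |g (f z.1) - φ z| + |f z.1 - T z| := by
          refine (abs_add_le _ _).trans ?_
          rw [abs_neg]
      _ ≤ L/B + 1/B := add_le_add hz1 hz2
      _ = (1 + L)/B := by ring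
  rw [e1, e2, ← integral_sub hu hv]
  calc |∫ z, ((|g (f z.1) - f z.1|) - (|q z - T z|)) ∂D|
      ≤ ∫ z, |(|g (f z.1) - f z.1|) - (|q z - T z|)| ∂D := by
        simpa [Real.norm_eq_abs] using
          norm_integral_le_integral_norm (μ := D)
            (fun z => (|g (f z.1) - f z.1|) - (|q z - T z|))
    _ ≤ ∫ zz, ((1 + L)/B) ∂D := integral_mono_ae (hu.sub hv).abs (integrable_const _) haebd
    _ = (1 + L)/B := by simp

end Calib
end
end

section
/- Fix a 2n-tuple of data points z̃ = (z̃_{m,0}, z̃_{m,1})_{m=1}^n in Z, a measurable predictor f : X → [0,1], and a finite measurable partition I of (0,1] into B bins, with bin losses l_i(z) = (y − f(x)) · 1_{f(x) ∈ I_i}. Let U = (U_1, …, U_n) be i.i.d. uniform on {0,1}. Then for every t ≥ 0, E_U[exp(t Σ_{i=1}^B |(1/n) Σ_{m=1}^n (l_i(z̃_{m,1−U_m}) − l_i(z̃_{m,U_m}))|)] ≤ 2^B · exp(2t²/n). -/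
open MeasureTheory Set

noncomputable section

namespace Calib

variable {X : Type*} [MeasurableSpace X]

def sg (b : Bool) : ℝ := if b then 1 else -1

lemma abs_sg (b : Bool) : |sg b| = 1 := by cases b <;> simp [sg]

lemma exp_abs_le (t x : ℝ) : Real.exp (t * |x|) ≤ ∑ b : Bool, Real.exp (sg b * (t * x)) := by
  rcases abs_cases x with ⟨h1, _⟩ | ⟨h1, _⟩ <;> rw [h1] <;>
    simp [sg, Fintype.sum_bool] <;> nlinarith [Real.exp_pos (t * x), Real.exp_pos (-(t * x))]

lemma abs_signed_sum_le {B : ℕ} (f : X → ℝ) (hrange : ∀ x, f x ∈ Set.Icc (0:ℝ) 1)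
    (I : Fin B → Set ℝ) (huniq : ∀ x, ∃! i, f x ∈ I i)
    (s : Fin B → Bool) (z : X × ℝ) (hz : z.2 = 0 ∨ z.2 = 1) :
    |∑ i, sg (s i) * binLoss f (I i) z| ≤ 1 := by
  obtain ⟨i0, hi0, huni⟩ := huniq z.1
  rw [Finset.sum_eq_single i0 (fun i _ hi => by
    have hni : f z.1 ∉ I i := fun h => hi (huni i h)
    simp [binLoss, Set.indicator_of_notMem hni]) (by simp)]
  rw [abs_mul, abs_sg, one_mul, binLoss, Set.indicator_of_mem hi0, mul_one]
  have h1 := (hrange z.1).1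
  have h2 := (hrange z.1).2
  rcases hz with h | h <;> rw [h, abs_le] <;> constructor <;> linarith

/-- Supersample exponential-moment bound for the bin losses: with a fixed
`2n`-tuple `z̃`, a partition of `(0,1]` into `B` bins, and `U` i.i.d. uniform on `{0,1}ⁿ`,
for every `t ≥ 0`,
`E_U[exp(t Σ_i |(1/n) Σ_m (l_i(z̃_{m,1−U_m}) − l_i(z̃_{m,U_m}))|)] ≤ 2^B · exp(2t²/n)`. -/
theorem supersample_exp_moment_binLoss
    (n : ℕ) {B : ℕ}
    (zt : Fin n → Bool → X × ℝ)
    (f : X → ℝ) (hf : Measurable f) (hrange : ∀ x, f x ∈ Set.Icc (0 : ℝ) 1)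
    (hY : ∀ m b, (zt m b).2 = 0 ∨ (zt m b).2 = 1)
    (I : Fin B → Set ℝ) (hI : IsBinning I)
    (huniq : ∀ x, ∃! i, f x ∈ I i)
    (t : ℝ) (ht : 0 ≤ t) :
    ∫ U : Fin n → Bool,
        Real.exp (t * ∑ i, |(1 / (n : ℝ)) *
          ∑ m, (binLoss f (I i) (zt m (!(U m))) - binLoss f (I i) (zt m (U m)))|)
        ∂(PMF.uniformOfFintype (Fin n → Bool)).toMeasure
      ≤ 2 ^ B * Real.exp (2 * t ^ 2 / n) := by
  classical
  set a : Fin B → (Fin n → Bool) → ℝ := fun i U => (1 / (n : ℝ)) *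
      ∑ m, (binLoss f (I i) (zt m (!(U m))) - binLoss f (I i) (zt m (U m))) with ha
  -- Step 1: integral as a finite sum
  have hμ : ∀ U : Fin n → Bool,
      ((PMF.uniformOfFintype (Fin n → Bool)).toMeasure {U}).toReal = ((2 : ℝ) ^ n)⁻¹ := by
    intro U
    rw [PMF.toMeasure_apply_singleton _ _ (measurableSet_singleton U),
      PMF.uniformOfFintype_apply]
    simp [Fintype.card_fun]
  rw [integral_fintype (Integrable.of_finite)]
  simp only [measureReal_def, hμ, smul_eq_mul]
  -- Step 2: pointwise bound via sign expansion
  have hpt : ∀ U : Fin n → Bool, Real.exp (t * ∑ i, |a i U|) ≤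
      ∑ s : Fin B → Bool, Real.exp (∑ i, sg (s i) * (t * a i U)) := by
    intro U
    rw [Finset.mul_sum, Real.exp_sum]
    calc ∏ i, Real.exp (t * |a i U|)
        ≤ ∏ i, ∑ b : Bool, Real.exp (sg b * (t * a i U)) := by
          apply Finset.prod_le_prod (fun i _ => (Real.exp_pos _).le)
            (fun i _ => exp_abs_le t (a i U))
      _ = ∑ s : Fin B → Bool, Real.exp (∑ i, sg (s i) * (t * a i U)) := by
          rw [Finset.prod_univ_sum (fun _ => Finset.univ)]
          rw [Fintype.piFinset_univ]
          exact Finset.sum_congr rfl (fun s _ => (Real.exp_sum _ _).symm)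
  -- Step 3: for each sign vector, the average is ≤ exp(2t²/n)
  have hsign : ∀ s : Fin B → Bool,
      ∑ U : Fin n → Bool, ((2:ℝ)^n)⁻¹ * Real.exp (∑ i, sg (s i) * (t * a i U))
        ≤ Real.exp (2 * t ^ 2 / n) := by
    intro s
    set e : Fin n → Bool → ℝ := fun m b => (t * (1 / (n : ℝ))) *
        ∑ i, sg (s i) * (binLoss f (I i) (zt m (!b)) - binLoss f (I i) (zt m b)) with he
    have hrewrite : ∀ U : Fin n → Bool,
        ∑ i, sg (s i) * (t * a i U) = ∑ m, e m (U m) := by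
      intro U
      simp only [ha, he, Finset.mul_sum]
      rw [Finset.sum_comm]
      exact Finset.sum_congr rfl fun m _ => Finset.sum_congr rfl fun i _ => by ring
    have hneg : ∀ m, e m true = - e m false := by
      intro m
      simp only [he, Bool.not_true, Bool.not_false]
      rw [← mul_neg, ← Finset.sum_neg_distrib]
      congr 1
      exact Finset.sum_congr rfl fun i _ => by ring
    have habs : ∀ m, |e m false| ≤ 2 * t / n := by
      intro m
      rw [he, abs_mul]
      have h1 : |∑ i, sg (s i) * (binLoss f (I i) (zt m (!false)) - binLoss f (I i) (zt m false))| ≤ 2 := by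
        have hsplit : ∑ i, sg (s i) * (binLoss f (I i) (zt m (!false)) - binLoss f (I i) (zt m false))
            = (∑ i, sg (s i) * binLoss f (I i) (zt m true))
              - ∑ i, sg (s i) * binLoss f (I i) (zt m false) := by
          rw [← Finset.sum_sub_distrib]
          exact Finset.sum_congr rfl fun i _ => by simp; ring
        rw [hsplit]
        calc |(∑ i, sg (s i) * binLoss f (I i) (zt m true)) - ∑ i, sg (s i) * binLoss f (I i) (zt m false)|
            ≤ |∑ i, sg (s i) * binLoss f (I i) (zt m true)| + |∑ i, sg (s i) * binLoss f (I i) (zt m false)| :=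
              abs_sub _ _
          _ ≤ 2 := by
              have := abs_signed_sum_le f hrange I huniq s (zt m true) (hY m true)
              have := abs_signed_sum_le f hrange I huniq s (zt m false) (hY m false)
              linarith
      have h2 : |t * (1 / (n:ℝ))| = t / n := by
        rw [abs_mul, abs_of_nonneg ht, abs_of_nonneg (by positivity)]
        ring
      calc |t * (1/(n:ℝ))| * |∑ i, sg (s i) * (binLoss f (I i) (zt m (!false)) - binLoss f (I i) (zt m false))|
          ≤ (t / n) * 2 := by
            rw [h2]; exact mul_le_mul_of_nonneg_left h1 (by positivity)
        _ = 2 * t / n := by ring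
    have hfac : ∀ m, ∑ b : Bool, Real.exp (e m b) ≤ 2 * Real.exp (2 * t^2 / (n:ℝ)^2) := by
      intro m
      rw [Fintype.sum_bool, hneg m]
      have hc : Real.exp (- e m false) + Real.exp (e m false) = 2 * Real.cosh (e m false) := by
        rw [Real.cosh_eq]; ring
      rw [hc]
      have h1 : Real.cosh (e m false) ≤ Real.exp ((e m false)^2 / 2) :=
        Real.cosh_le_exp_half_sq _
      have h2 : (e m false)^2 / 2 ≤ 2 * t^2 / (n:ℝ)^2 := by
        have := habs m
        have hsq : (e m false)^2 ≤ (2*t/n)^2 := by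
          rw [← sq_abs]
          exact pow_le_pow_left₀ (abs_nonneg _) this 2
        have : (2*t/(n:ℝ))^2 = 4 * t^2 / (n:ℝ)^2 := by ring
        rw [this] at hsq
        linarith [hsq, (by ring : 4*t^2/(n:ℝ)^2 = 2*(2*t^2/(n:ℝ)^2))]
      calc 2 * Real.cosh (e m false) ≤ 2 * Real.exp ((e m false)^2/2) := by linarith
        _ ≤ 2 * Real.exp (2*t^2/(n:ℝ)^2) := by
            have := Real.exp_le_exp.mpr h2; linarith
    calc ∑ U : Fin n → Bool, ((2:ℝ)^n)⁻¹ * Real.exp (∑ i, sg (s i) * (t * a i U))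
        = ((2:ℝ)^n)⁻¹ * ∑ U : Fin n → Bool, ∏ m, Real.exp (e m (U m)) := by
          rw [← Finset.mul_sum]
          congr 1
          exact Finset.sum_congr rfl fun U _ => by rw [hrewrite U, Real.exp_sum]
      _ = ((2:ℝ)^n)⁻¹ * ∏ m, ∑ b : Bool, Real.exp (e m b) := by
          congr 1
          rw [Finset.prod_univ_sum (fun _ => (Finset.univ : Finset Bool))
            (fun m b => Real.exp (e m b)), Fintype.piFinset_univ]
      _ ≤ ((2:ℝ)^n)⁻¹ * ∏ m : Fin n, (2 * Real.exp (2*t^2/(n:ℝ)^2)) := by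
          apply mul_le_mul_of_nonneg_left _ (by positivity)
          apply Finset.prod_le_prod (fun m _ => Finset.sum_nonneg fun b _ => (Real.exp_pos _).le)
            (fun m _ => hfac m)
      _ = Real.exp (2 * t^2 / n) := by
          rw [Finset.prod_const, Finset.card_univ, Fintype.card_fin, mul_pow,
            ← Real.exp_nat_mul]
          rw [inv_mul_eq_div, mul_comm ((2:ℝ)^n), mul_div_assoc, div_self (by positivity),
            mul_one]
          congr 1
          rcases eq_or_ne (n:ℝ) 0 with h | h
          · simp [h]
          · field_simp
  -- Combine
  calc ∑ U : Fin n → Bool, ((2:ℝ)^n)⁻¹ * Real.exp (t * ∑ i, |a i U|)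
      ≤ ∑ U : Fin n → Bool, ((2:ℝ)^n)⁻¹ *
          ∑ s : Fin B → Bool, Real.exp (∑ i, sg (s i) * (t * a i U)) := by
        apply Finset.sum_le_sum fun U _ =>
          mul_le_mul_of_nonneg_left (hpt U) (by positivity)
    _ = ∑ s : Fin B → Bool, ∑ U : Fin n → Bool,
          ((2:ℝ)^n)⁻¹ * Real.exp (∑ i, sg (s i) * (t * a i U)) := by
        simp only [Finset.mul_sum]
        rw [Finset.sum_comm]
    _ ≤ ∑ _s : Fin B → Bool, Real.exp (2 * t^2 / n) :=
        Finset.sum_le_sum fun s _ => hsign s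
    _ = 2 ^ B * Real.exp (2 * t^2 / n) := by
        rw [Finset.sum_const, Finset.card_univ, Fintype.card_fun]
        simp [nsmul_eq_mul]

end Calib
end
end
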